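/- arXiv:2310.08563 — 6 statements merged into one kernel-verified Lean document; each statement's English description precedes it below -/
import Mathlib

section
/- Let r and d be positive integers, and let S be a finite set of points in ℝ^d with at least (d+1)(r-1)+1 points. Then there exists a partition of S into r pairwise disjoint nonempty parts whose convex hulls have a common point. -/
/-!
Sarkaria's tensor trick reduces Tverberg's theorem to Bárány's colorful Carathéodory theorem.
Lift each point `aᵢ` of `E` to `bᵢ = (aᵢ, 1)` and tensor it with `r + 1` vectors `vⱼ ∈ ℝ^r` whose
only linear relation is `∑ⱼ vⱼ = 0`, so that the points `bᵢ ⊗ vⱼ` of colour `i` average to `0`.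
As `(dim E + 1) r` is less than the number of colours, colorful Carathéodory picks a `vⱼ` for each
point with `0 = ∑ᵢ λᵢ bᵢ ⊗ v_{c i}`. Grouped by `j`, this reads `∑ⱼ Aⱼ ⊗ vⱼ = 0` for
`Aⱼ = ∑_{c i = j} λᵢ bᵢ`, so all the `Aⱼ` are equal: the classes `c⁻¹(j)` carry the same mass
and have the same barycentre.

For colorful Carathéodory, take the transversal whose hull comes closest to `0`, at `x`. If
`x ≠ 0`, then `x` lies in the hull of at most `dim E` of its points, all on the hyperplane
`⟪x, ·⟫ = ‖x‖²`. Some colour is then unused; replacing its point by one with `⟪x, p⟫ ≤ 0`,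
which exists as `0` is in the hull of that colour, yields a hull closer to `0`.
-/

open Finset

noncomputable instance (d : ℕ) : DecidableEq (EuclideanSpace ℝ (Fin d)) :=
  Classical.decEq _

open Module
open scoped RealInnerProductSpace

theorem exists_mem_stdSimplex_sum_smul_eq {ι E : Type*} [Fintype ι] [AddCommGroup E] [Module ℝ E]
    {v : ι → E} {x : E} (hx : x ∈ convexHull ℝ (Set.range v)) :
    ∃ w ∈ stdSimplex ℝ ι, ∑ i, w i • v i = x := by
  classical
  have hv : Set.range v = Fintype.linearCombination ℝ v '' Set.range (fun i => Pi.single i 1) := by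
    rw [← Set.range_comp]
    congr 1
    ext i
    simp [Fintype.linearCombination_apply_single]
  rw [hv, ← LinearMap.image_convexHull, convexHull_rangle_single_eq_stdSimplex] at hx
  obtain ⟨w, hw, rfl⟩ := hx
  exact ⟨w, hw, (Fintype.linearCombination_apply ℝ v w).symm⟩

theorem norm_sq_le_inner_of_isMinOn {E : Type*} [NormedAddCommGroup E] [InnerProductSpace ℝ E]
    {K : Set E} (hK : Convex ℝ K) {x y : E} (hx : x ∈ K) (hmin : IsMinOn (‖·‖) K x)
    (hy : y ∈ K) : ‖x‖ ^ 2 ≤ ⟪x, y⟫ := by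
  have : Nonempty K := ⟨⟨x, hx⟩⟩
  have hinf : ‖0 - x‖ = ⨅ w : K, ‖0 - (w : E)‖ := by
    refine le_antisymm (le_ciInf fun w => by simpa using hmin w.2) ?_
    exact ciInf_le ⟨0, by rintro _ ⟨w, rfl⟩; positivity⟩ (⟨x, hx⟩ : K)
  have := (norm_eq_iInf_iff_real_inner_le_zero hK hx).1 hinf y hy
  rw [zero_sub, inner_neg_left, inner_sub_right, real_inner_self_eq_norm_sq] at this
  linarith

theorem AffineIndependent.linearIndependent_of_forall_apply_eq {ι k V : Type*} [Field k]
    [AddCommGroup V] [Module k V] {z : ι → V} (hz : AffineIndependent k z) (φ : V →ₗ[k] k)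
    {c : k} (hc : c ≠ 0) (hφ : ∀ i, φ (z i) = c) : LinearIndependent k z := by
  refine linearIndependent_iff'.2 fun s g hg => affineIndependent_iff.1 hz s g ?_ hg
  have := congrArg φ hg
  simp only [map_sum, map_smul, hφ, smul_eq_mul, ← Finset.sum_mul, map_zero] at this
  exact (mul_eq_zero.1 this).resolve_right hc

section InnerProductSpace

variable {ι E : Type*} [NormedAddCommGroup E] [InnerProductSpace ℝ E] [FiniteDimensional ℝ E]

/-- The point lies on the supporting hyperplane `⟪x, ·⟫ = ‖x‖²`, which misses the origin, so
affinely independent points on it are linearly independent. -/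
theorem exists_card_le_finrank_mem_convexHull_image_of_isMinOn {f : ι → E} {x : E}
    (hx : x ∈ convexHull ℝ (Set.range f)) (hx0 : x ≠ 0)
    (hmin : IsMinOn (‖·‖) (convexHull ℝ (Set.range f)) x) :
    ∃ J : Finset ι, #J ≤ finrank ℝ E ∧ x ∈ convexHull ℝ (f '' J) := by
  classical
  obtain ⟨κ, _, z, w, hzf, hz, hw0, hw1, hwz⟩ := eq_pos_convex_span_of_mem_convexHull hx
  have hle : ∀ i, w i * ‖x‖ ^ 2 ≤ w i * ⟪x, z i⟫ := fun i =>
    mul_le_mul_of_nonneg_left (norm_sq_le_inner_of_isMinOn (convex_convexHull ℝ _) hx hmin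
      (subset_convexHull ℝ _ (hzf (Set.mem_range_self i)))) (hw0 i).le
  have hsum : ∑ i, w i * ‖x‖ ^ 2 = ∑ i, w i * ⟪x, z i⟫ := by
    simp_rw [← Finset.sum_mul, hw1, ← real_inner_smul_right, ← inner_sum, hwz,
      real_inner_self_eq_norm_sq, one_mul]
  have hzx : ∀ i, innerₗ E x (z i) = ‖x‖ ^ 2 := fun i =>
    (mul_left_cancel₀ (hw0 i).ne' ((Finset.sum_eq_sum_iff_of_le fun i _ => hle i).1 hsum i
      (mem_univ i))).symm
  have hcard := (hz.linearIndependent_of_forall_apply_eq _ (by positivity) hzx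
    ).fintype_card_le_finrank
  choose g hg using fun i => hzf (Set.mem_range_self i)
  refine ⟨univ.image g, card_image_le.trans hcard, convexHull_mono (s := Set.range z) ?_ ?_⟩
  · exact fun y ⟨i, hi⟩ => ⟨g i, by simp, hi ▸ hg i⟩
  · exact mem_convexHull_of_exists_fintype w z (fun i => (hw0 i).le) hw1 (fun i => ⟨i, rfl⟩) hwz

theorem exists_colorful_zero_mem_convexHull_of_inner [Fintype ι] (C : ι → Finset E)
    (hC : ∀ i, (0 : E) ∈ convexHull ℝ (C i : Set E)) (hcard : finrank ℝ E < Fintype.card ι) :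
    ∃ f : ι → E, (∀ i, f i ∈ C i) ∧ (0 : E) ∈ convexHull ℝ (Set.range f) := by
  classical
  obtain ⟨i₁⟩ : Nonempty ι := Fintype.card_pos_iff.1 (by omega)
  let Φ := Fintype.piFinset C
  obtain ⟨f₀, hf₀⟩ : Φ.Nonempty := Fintype.piFinset_nonempty.2 fun i =>
    by exact_mod_cast convexHull_nonempty_iff.1 ⟨0, hC i⟩
  obtain ⟨x, hxU, hmin⟩ := (isCompact_biUnion Φ fun f _ =>
    (Set.finite_range f).isCompact_convexHull ℝ).exists_isMinOn
    ⟨f₀ i₁, Set.mem_biUnion hf₀ (subset_convexHull ℝ _ (Set.mem_range_self i₁))⟩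
    continuous_norm.continuousOn
  obtain ⟨f, hfΦ, hxf⟩ := Set.mem_iUnion₂.1 hxU
  suffices x = 0 from ⟨f, Fintype.mem_piFinset.1 hfΦ, this ▸ hxf⟩
  by_contra hx0
  obtain ⟨J, hJ, hxJ⟩ := exists_card_le_finrank_mem_convexHull_image_of_isMinOn hxf hx0
    (hmin.on_subset fun _ hy => Set.mem_biUnion hfΦ hy)
  obtain ⟨i₀, -, hi₀⟩ := exists_mem_notMem_of_card_lt_card (hJ.trans_lt hcard)
  obtain ⟨p, hpC, hp⟩ := ((innerₗ E x).concaveOn convex_univ).exists_le_of_mem_convexHull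
    (Set.subset_univ _) (hC i₀)
  let f' := Function.update f i₀ p
  have hf'Φ : f' ∈ Φ := Fintype.mem_piFinset.2 fun i => by
    rcases eq_or_ne i i₀ with rfl | hi
    · simpa [f'] using hpC
    · simpa [f', hi] using Fintype.mem_piFinset.1 hfΦ i
  have hxf' : x ∈ convexHull ℝ (Set.range f') := by
    refine convexHull_mono ?_ hxJ
    rintro _ ⟨i, hi, rfl⟩
    exact ⟨i, Function.update_of_ne (ne_of_mem_of_not_mem hi hi₀) _ _⟩
  have hxp := norm_sq_le_inner_of_isMinOn (convex_convexHull ℝ _) hxf'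
    (hmin.on_subset fun _ hy => Set.mem_biUnion hf'Φ hy)
    (subset_convexHull ℝ _ ⟨i₀, Function.update_self _ _ _⟩)
  simp only [innerₗ_apply_apply, inner_zero_right] at hp
  have hx2 : ‖x‖ ^ 2 ≤ 0 := hxp.trans hp
  exact hx0 (by simpa using hx2)

end InnerProductSpace

/-- **Colorful Carathéodory theorem** (Bárány). -/
theorem exists_colorful_zero_mem_convexHull {ι V : Type*} [Fintype ι] [AddCommGroup V]
    [Module ℝ V] [FiniteDimensional ℝ V] (C : ι → Finset V)
    (hC : ∀ i, (0 : V) ∈ convexHull ℝ (C i : Set V)) (hcard : finrank ℝ V < Fintype.card ι) :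
    ∃ f : ι → V, (∀ i, f i ∈ C i) ∧ (0 : V) ∈ convexHull ℝ (Set.range f) := by
  classical
  let L := LinearEquiv.ofFinrankEq V (EuclideanSpace ℝ (Fin (finrank ℝ V)))
    finrank_euclideanSpace_fin.symm
  obtain ⟨f, hfC, hf0⟩ := exists_colorful_zero_mem_convexHull_of_inner (fun i => (C i).image L)
    (fun i => by
      rw [coe_image, ← LinearEquiv.coe_toLinearMap, ← LinearMap.image_convexHull]
      exact ⟨0, hC i, map_zero L⟩)
    (by simpa using hcard)
  refine ⟨L.symm ∘ f, fun i => ?_, ?_⟩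
  · obtain ⟨y, hy, hyf⟩ := mem_image.1 (hfC i)
    simpa [← hyf] using hy
  · rw [Set.range_comp, ← LinearEquiv.coe_toLinearMap, ← LinearMap.image_convexHull]
    exact ⟨0, hf0, map_zero _⟩

def sarkariaVector (r : ℕ) : Fin (r + 1) → Fin r → ℝ :=
  Fin.cons (fun _ => -1) fun m => Pi.single m 1

theorem sum_sarkariaVector_smul {F : Type*} [AddCommGroup F] [Module ℝ F] {r : ℕ}
    (A : Fin (r + 1) → F) (m : Fin r) :
    ∑ j, sarkariaVector r j m • A j = A m.succ - A 0 := by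
  simp [Fin.sum_univ_succ, sarkariaVector, Pi.single_apply, sub_eq_neg_add]

section Tverberg

variable {ι E : Type*} [Fintype ι] [AddCommGroup E] [Module ℝ E]

theorem exists_balanced_coloring [FiniteDimensional ℝ E] (a : ι → E) {r : ℕ}
    (h : (finrank ℝ E + 1) * r < Fintype.card ι) :
    ∃ (c : ι → Fin (r + 1)) (w : ι → ℝ), w ∈ stdSimplex ℝ ι ∧ ∀ j,
      ∑ i ∈ univ.filter (c · = j), w i • (a i, (1 : ℝ)) =
        ∑ i ∈ univ.filter (c · = 0), w i • (a i, (1 : ℝ)) := by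
  classical
  -- `T i j = (a i, 1) ⊗ v j`, with `(E × ℝ) ⊗ ℝ^r` modelled as `Fin r → E × ℝ`
  let T : ι → Fin (r + 1) → Fin r → E × ℝ := fun i j m => sarkariaVector r j m • (a i, 1)
  have hT : ∀ i, ∑ j, T i j = 0 := fun i => funext fun m => by
    rw [Finset.sum_apply]
    exact (sum_sarkariaVector_smul (fun _ => (a i, 1)) m).trans (sub_self _)
  obtain ⟨f, hfT, hf0⟩ := exists_colorful_zero_mem_convexHull (fun i => univ.image (T i))
    (fun i => mem_convexHull_of_exists_fintype (fun _ => ((r : ℝ) + 1)⁻¹) (T i)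
      (fun _ => by positivity) (by simp [Nat.cast_add_one_ne_zero]) (fun j => by simp)
      (by rw [← smul_sum, hT, smul_zero]))
    (by rw [finrank_pi_fintype]; simpa [finrank_prod, mul_comm] using h)
  choose c hc using fun i => mem_image.1 (hfT i)
  obtain ⟨w, hw, hwf⟩ := exists_mem_stdSimplex_sum_smul_eq hf0
  refine ⟨c, w, hw, Fin.cases rfl fun m => sub_eq_zero.1 ?_⟩
  rw [← sum_sarkariaVector_smul (fun j => ∑ i ∈ univ.filter (c · = j), w i • (a i, (1 : ℝ)))]
  refine Eq.trans ?_ (congrFun hwf m)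
  simp_rw [Finset.sum_apply, ← (hc _).2, smul_sum]
  rw [← sum_fiberwise univ c (fun i => (w i • T i (c i)) m)]
  refine sum_congr rfl fun j _ => sum_congr rfl fun i hi => ?_
  rw [(mem_filter.1 hi).2]
  exact smul_comm _ _ _

theorem exists_forall_mem_convexHull_fiber {κ : Type*} [Fintype κ] [DecidableEq κ] (a : ι → E)
    (c : ι → κ) {w : ι → ℝ} (hw : w ∈ stdSimplex ℝ ι) (j₀ : κ)
    (hbal : ∀ j, ∑ i ∈ univ.filter (c · = j), w i • (a i, (1 : ℝ)) =
      ∑ i ∈ univ.filter (c · = j₀), w i • (a i, (1 : ℝ))) :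
    ∃ x, ∀ j, x ∈ convexHull ℝ (a '' {i | c i = j}) := by
  set y := ∑ i ∈ univ.filter (c · = j₀), w i • a i
  set μ := ∑ i ∈ univ.filter (c · = j₀), w i
  have hfst : ∀ j, ∑ i ∈ univ.filter (c · = j), w i • a i = y := fun j => by
    simpa [Prod.fst_sum] using congrArg Prod.fst (hbal j)
  have hsnd : ∀ j, ∑ i ∈ univ.filter (c · = j), w i = μ := fun j => by
    simpa [Prod.snd_sum] using congrArg Prod.snd (hbal j)
  have hμ : 0 < μ := by
    have hμ1 : Fintype.card κ * μ = 1 := by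
      rw [← hw.2, ← sum_fiberwise univ c w]
      simp [hsnd]
    have hμ0 : μ ≠ 0 := by
      rintro h
      simp [h] at hμ1
    exact (sum_nonneg fun i _ => hw.1 i).lt_of_ne hμ0.symm
  refine ⟨μ⁻¹ • y, fun j => ?_⟩
  have hx : μ⁻¹ • y = (univ.filter (c · = j)).centerMass w a := by
    rw [centerMass, hsnd, hfst]
  rw [hx]
  exact centerMass_mem_convexHull _ (fun i _ => hw.1 i) (hsnd j ▸ hμ)
    fun i hi => ⟨i, (mem_filter.1 hi).2, rfl⟩

theorem exists_tverberg_coloring [FiniteDimensional ℝ E] (a : ι → E) {r : ℕ}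
    (h : (finrank ℝ E + 1) * r < Fintype.card ι) :
    ∃ (c : ι → Fin (r + 1)) (x : E), ∀ j, x ∈ convexHull ℝ (a '' {i | c i = j}) := by
  obtain ⟨c, w, hw, hbal⟩ := exists_balanced_coloring a h
  exact ⟨c, exists_forall_mem_convexHull_fiber a c hw 0 hbal⟩

end Tverberg

theorem Finpartition.exists_parts_eq_fibers {α κ : Type*} [DecidableEq α] [Fintype κ]
    {s : Finset α} (c : s → κ) (hc : Function.Surjective c) :
    ∃ P : Finpartition s, #P.parts = Fintype.card κ ∧
      ∀ t ∈ P.parts, ∃ j, (t : Set α) = Subtype.val '' {i | c i = j} := by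
  classical
  let Q : κ → Finset α := fun j => (univ.filter (c · = j)).map (Function.Embedding.subtype _)
  have hQ : ∀ j a (ha : a ∈ s), a ∈ Q j ↔ c ⟨a, ha⟩ = j := fun j a ha => by
    simpa [Q] using ⟨fun ⟨_, h⟩ => h, fun h => ⟨ha, h⟩⟩
  have hQs : ∀ j, Q j ⊆ s := fun j a ha => by
    obtain ⟨i, -, rfl⟩ := mem_map.1 ha
    exact i.2
  have hQ_nonempty : ∀ j, (Q j).Nonempty := fun j => by
    obtain ⟨i, hi⟩ := hc j
    exact ⟨i, (hQ j i i.2).2 hi⟩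
  have hQ_inj : Function.Injective Q := fun j j' hjj' => by
    obtain ⟨a, ha⟩ := hQ_nonempty j
    exact ((hQ j a (hQs j ha)).1 ha).symm.trans ((hQ j' a (hQs j ha)).1 (hjj' ▸ ha))
  have hcover : ∀ a ∈ s, ∃! t, t ∈ univ.image Q ∧ a ∈ t := by
    intro a ha
    refine ⟨Q (c ⟨a, ha⟩), ⟨mem_image_of_mem _ (mem_univ _), (hQ _ a ha).2 rfl⟩, ?_⟩
    rintro _ ⟨ht, hat⟩
    obtain ⟨j, -, rfl⟩ := mem_image.1 ht
    rw [(hQ j a ha).1 hat]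
  refine ⟨.ofExistsUnique (univ.image Q) (by simpa using hQs) hcover
    (by simpa using fun j h => (hQ_nonempty j).ne_empty h), ?_, ?_⟩
  · rw [ofExistsUnique_parts, card_image_of_injective _ hQ_inj, card_univ]
  · simp only [ofExistsUnique_parts, mem_image, mem_univ, true_and, forall_exists_index]
    rintro _ j rfl
    exact ⟨j, by simp [Q]⟩

theorem tverberg_general (d r : ℕ) (hr : 0 < r)
    (S : Finset (EuclideanSpace ℝ (Fin d)))
    (hS : (d + 1) * (r - 1) + 1 ≤ S.card) :
    ∃ P : Finpartition S, P.parts.card = r ∧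
      (⋂ t ∈ P.parts, convexHull ℝ (t : Set (EuclideanSpace ℝ (Fin d)))).Nonempty := by
  obtain ⟨r, rfl⟩ := Nat.exists_eq_add_one_of_ne_zero hr.ne'
  have hcard : (finrank ℝ (EuclideanSpace ℝ (Fin d)) + 1) * r < Fintype.card S := by
    rw [finrank_euclideanSpace_fin, Fintype.card_coe]
    rw [Nat.add_sub_cancel] at hS
    omega
  obtain ⟨c, x, hx⟩ := exists_tverberg_coloring ((↑) : S → EuclideanSpace ℝ (Fin d)) hcard
  obtain ⟨P, hP, hPc⟩ := Finpartition.exists_parts_eq_fibers c fun j =>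
    Set.image_nonempty.1 (convexHull_nonempty_iff.1 ⟨x, hx j⟩)
  refine ⟨P, by simpa using hP, x, Set.mem_iInter₂.2 fun t ht => ?_⟩
  obtain ⟨j, hj⟩ := hPc t ht
  exact hj ▸ hx j

/-- **Tverberg's theorem.** Any set of at least `(d+1)(r-1)+1` points in `ℝ^d` admits a
partition into `r` pairwise disjoint nonempty parts whose convex hulls have a common
point. -/
theorem tverberg (d r : ℕ) (hd : 0 < d) (hr : 0 < r)
    (S : Finset (EuclideanSpace ℝ (Fin d)))
    (hS : (d + 1) * (r - 1) + 1 ≤ S.card) :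
    ∃ P : Finpartition S, P.parts.card = r ∧
      (⋂ t ∈ P.parts, convexHull ℝ (t : Set (EuclideanSpace ℝ (Fin d)))).Nonempty :=
  tverberg_general d r hr S hS
end

section
/- Let P_1, P_2, …, P_r be pairwise disjoint finite sets in ℝ^d. Then ⋂_{j=1}^r conv(P_j) ≠ ∅ if and only if for each j = 1, …, r there exists a subset P_j' ⊆ P_j such that ⋂_{j=1}^r conv(P_j') ≠ ∅ and |⋃_{j=1}^r P_j'| ≤ (d+1)(r-1)+1. -/
/-!
Sarkaria's lifting argument. Write the colours as `0, …, n` and lift a point `p` of colour `j`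
to `(p, 1)` placed in slot `j` of `(E × 𝕜)ⁿ⁺¹`, followed by the projection
`f ↦ (f k - f n)ₖ` onto `(E × 𝕜)ⁿ`, whose kernel is the diagonal. A common point of the hulls
puts `0` in the convex hull of the lifted points, and Carathéodory's theorem in the
`n (d + 1)`-dimensional space `(E × 𝕜)ⁿ` keeps at most `n (d + 1) + 1` of them. A convex
combination of lifted points vanishes exactly when the weighted sums `∑ wₚ • (p, 1)` over the
colour classes coincide; dehomogenizing this common value gives a point in the convex hull of
every (shrunken) colour class.
-/

open Finset

open Module

section Caratheodory

variable {𝕜 E V ι : Type*} [Field 𝕜] [LinearOrder 𝕜] [IsStrictOrderedRing 𝕜]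
  [AddCommGroup E] [Module 𝕜 E] [AddCommGroup V] [Module 𝕜 V]

theorem exists_finset_card_le_finrank_succ_mem_convexHull [FiniteDimensional 𝕜 V]
    {s : Set V} {x : V} (hx : x ∈ convexHull 𝕜 s) :
    ∃ t : Finset V, ↑t ⊆ s ∧ #t ≤ finrank 𝕜 V + 1 ∧ x ∈ convexHull 𝕜 (t : Set V) := by
  rw [convexHull_eq_union] at hx
  simp only [Set.mem_iUnion] at hx
  obtain ⟨t, hts, ht, hxt⟩ := hx
  refine ⟨t, hts, ?_, hxt⟩
  have hcard := ht.card_le_finrank_succ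
  rw [Fintype.card_coe] at hcard
  have hspan := Submodule.finrank_le (vectorSpan 𝕜 (Set.range ((↑) : t → V)))
  omega

theorem exists_subset_card_le_finrank_succ_sum_smul_eq [FiniteDimensional 𝕜 V]
    {A : Finset ι} {z : ι → V} {x : V} (hx : x ∈ convexHull 𝕜 (z '' A)) :
    ∃ B ⊆ A, #B ≤ finrank 𝕜 V + 1 ∧ ∃ w : ι → 𝕜,
      (∀ i ∈ B, 0 ≤ w i) ∧ ∑ i ∈ B, w i = 1 ∧ ∑ i ∈ B, w i • z i = x := by
  classical
  obtain ⟨t, hts, htcard, hxt⟩ := exists_finset_card_le_finrank_succ_mem_convexHull hx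
  obtain ⟨B, hBA, hinj, rfl⟩ :=
    exists_subset_injOn_image_eq_of_surjOn (A : Set ι) t (fun y hy => hts hy)
  obtain ⟨μ, hμ0, hμ1, hμx⟩ := Finset.mem_convexHull'.1 hxt
  refine ⟨B, Finset.coe_subset.1 hBA, (card_image_of_injOn hinj).symm.trans_le htcard,
    μ ∘ z, fun i hi => hμ0 _ (mem_image_of_mem z hi), ?_, ?_⟩
  · rwa [sum_image hinj] at hμ1
  · rwa [sum_image hinj] at hμx

theorem exists_sum_smul_prodMk_one_eq_of_mem_convexHull {s : Finset E} {x : E}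
    (hx : x ∈ convexHull 𝕜 (s : Set E)) :
    ∃ w : E → 𝕜, (∀ p ∈ s, 0 ≤ w p) ∧ ∑ p ∈ s, w p • (p, (1 : 𝕜)) = (x, 1) := by
  obtain ⟨w, hw0, hw1, hwx⟩ := Finset.mem_convexHull'.1 hx
  exact ⟨w, hw0, Prod.ext (by simpa [Prod.fst_sum] using hwx) (by simpa [Prod.snd_sum] using hw1)⟩

theorem inv_smul_mem_convexHull_of_sum_smul_prodMk_one_eq {s : Finset E} {w : E → 𝕜}
    (hw0 : ∀ p ∈ s, 0 ≤ w p) {y : E} {a : 𝕜} (h : ∑ p ∈ s, w p • (p, (1 : 𝕜)) = (y, a))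
    (ha : 0 < a) : a⁻¹ • y ∈ convexHull 𝕜 (s : Set E) := by
  have hsum : ∑ p ∈ s, w p = a := by simpa [Prod.snd_sum] using congrArg Prod.snd h
  have hy : ∑ p ∈ s, w p • p = y := by simpa [Prod.fst_sum] using congrArg Prod.fst h
  have hmem := s.centerMass_id_mem_convexHull hw0 (hsum ▸ ha)
  rwa [Finset.centerMass, hsum, funext id_eq, hy] at hmem

end Caratheodory

section Sarkaria

variable {R E V : Type*} [Ring R] [AddCommGroup E] [Module R E] [AddCommGroup V] [Module R V]

variable (R V) in
def subLast (n : ℕ) : (Fin (n + 1) → V) →ₗ[R] Fin n → V :=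
  LinearMap.funLeft R V Fin.castSucc - LinearMap.funLeft R V (fun _ => Fin.last n)

theorem subLast_eq_zero_iff {n : ℕ} {f : Fin (n + 1) → V} :
    subLast R V n f = 0 ↔ ∀ j, f j = f (Fin.last n) := by
  simp only [subLast, funext_iff, LinearMap.sub_apply, LinearMap.funLeft_apply, sub_eq_zero]
  exact ⟨fun h j => Fin.lastCases rfl h j, fun h k => h _⟩

variable (R) in
def sarkariaLift {n : ℕ} (i : (_ : Fin (n + 1)) × E) : Fin n → E × R :=
  subLast R (E × R) n (Pi.single i.1 (i.2, 1))

theorem sum_smul_sarkariaLift {n : ℕ} (Q : Fin (n + 1) → Finset E)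
    (w : (_ : Fin (n + 1)) × E → R) :
    ∑ i ∈ univ.sigma Q, w i • sarkariaLift R i =
      subLast R (E × R) n (fun j => ∑ p ∈ Q j, w ⟨j, p⟩ • (p, 1)) := by
  simp only [sarkariaLift, ← map_smul, ← map_sum, sum_sigma]
  congr 1
  ext j : 1
  simp [Finset.sum_apply, Pi.single_apply]

end Sarkaria

section Pór

variable {𝕜 E : Type*} [Field 𝕜] [LinearOrder 𝕜] [IsStrictOrderedRing 𝕜]
  [AddCommGroup E] [Module 𝕜 E] {n : ℕ}

theorem zero_mem_convexHull_image_sarkariaLift (P : Fin (n + 1) → Finset E) {x : E}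
    (hx : ∀ j, x ∈ convexHull 𝕜 (P j : Set E)) :
    (0 : Fin n → E × 𝕜) ∈ convexHull 𝕜 (sarkariaLift 𝕜 '' ↑(univ.sigma P)) := by
  choose α hα0 hα using fun j => exists_sum_smul_prodMk_one_eq_of_mem_convexHull (hx j)
  have hα1 : ∀ j, ∑ p ∈ P j, α j p = 1 := fun j => by
    simpa [Prod.snd_sum] using congrArg Prod.snd (hα j)
  have hsum : ∑ i ∈ univ.sigma P, α i.1 i.2 = n + 1 := by simp [sum_sigma, hα1]
  have hmem := (univ.sigma P).centerMass_mem_convexHull (w := fun i => α i.1 i.2)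
    (z := sarkariaLift 𝕜) (fun i hi => hα0 _ _ (mem_sigma.1 hi).2) (by rw [hsum]; positivity)
    (fun i hi => Set.mem_image_of_mem _ hi)
  have hconst : subLast 𝕜 (E × 𝕜) n (fun j => ∑ p ∈ P j, α j p • (p, 1)) = 0 :=
    subLast_eq_zero_iff.2 fun j => by rw [hα, hα]
  rwa [centerMass, sum_smul_sarkariaLift, hconst, smul_zero] at hmem

theorem nonempty_iInter_convexHull_of_sum_smul_sarkariaLift_eq_zero (Q : Fin (n + 1) → Finset E)
    {w : (_ : Fin (n + 1)) × E → 𝕜} (hw0 : ∀ i ∈ univ.sigma Q, 0 ≤ w i)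
    (hw1 : ∑ i ∈ univ.sigma Q, w i = 1) (hw : ∑ i ∈ univ.sigma Q, w i • sarkariaLift 𝕜 i = 0) :
    (⋂ j, convexHull 𝕜 (Q j : Set E)).Nonempty := by
  set c : Fin (n + 1) → E × 𝕜 := fun j => ∑ p ∈ Q j, w ⟨j, p⟩ • (p, 1)
  have hc : ∀ j, c j = c (Fin.last n) :=
    subLast_eq_zero_iff.1 (by rw [← sum_smul_sarkariaLift, hw])
  have hcsnd : (n + 1) * (c (Fin.last n)).2 = 1 := calc
    _ = ∑ j, (c j).2 := by simp [hc]
    _ = 1 := by simpa [c, Prod.snd_sum, sum_sigma] using hw1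
  have hpos : 0 < (c (Fin.last n)).2 := pos_of_mul_pos_right (hcsnd ▸ one_pos) (by positivity)
  exact ⟨(c (Fin.last n)).2⁻¹ • (c (Fin.last n)).1, Set.mem_iInter.2 fun j =>
    inv_smul_mem_convexHull_of_sum_smul_prodMk_one_eq
      (fun p hp => hw0 ⟨j, p⟩ (mem_sigma.2 ⟨mem_univ _, hp⟩)) (hc j) hpos⟩

theorem exists_subfamily_sum_card_le [FiniteDimensional 𝕜 E] (P : Fin (n + 1) → Finset E)
    {x : E} (hx : ∀ j, x ∈ convexHull 𝕜 (P j : Set E)) :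
    ∃ Q : Fin (n + 1) → Finset E, (∀ j, Q j ⊆ P j) ∧
      (⋂ j, convexHull 𝕜 (Q j : Set E)).Nonempty ∧ ∑ j, #(Q j) ≤ (finrank 𝕜 E + 1) * n + 1 := by
  classical
  have h0 := zero_mem_convexHull_image_sarkariaLift P hx
  obtain ⟨B, hBP, hBcard, w, hw0, hw1, hw⟩ := exists_subset_card_le_finrank_succ_sum_smul_eq h0
  set Q : Fin (n + 1) → Finset E := fun j => (P j).filter (fun p => ⟨j, p⟩ ∈ B)
  have hQB : univ.sigma Q = B := by
    ext ⟨j, p⟩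
    simpa [Q] using fun h => (mem_sigma.1 (hBP h)).2
  rw [← hQB] at hw0 hw1 hw hBcard
  refine ⟨Q, fun j => filter_subset _ _,
    nonempty_iInter_convexHull_of_sum_smul_sarkariaLift_eq_zero Q hw0 hw1 hw, ?_⟩
  rw [← card_sigma]
  simpa [finrank_pi_fintype, mul_comm] using hBcard

end Pór

theorem por_general (d r : ℕ)
    (P : Fin r → Finset (EuclideanSpace ℝ (Fin d))) :
    (⋂ j, convexHull ℝ (P j : Set (EuclideanSpace ℝ (Fin d)))).Nonempty ↔
      ∃ Q : Fin r → Finset (EuclideanSpace ℝ (Fin d)),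
        (∀ j, Q j ⊆ P j) ∧
        (⋂ j, convexHull ℝ (Q j : Set (EuclideanSpace ℝ (Fin d)))).Nonempty ∧
        (Finset.univ.biUnion Q).card ≤ (d + 1) * (r - 1) + 1 := by
  constructor
  · rintro ⟨x, hx⟩
    cases r with
    | zero => exact ⟨P, fun _ => subset_rfl, ⟨x, hx⟩, by simp⟩
    | succ n =>
      obtain ⟨Q, hQP, hQ, hcard⟩ := exists_subfamily_sum_card_le P (Set.mem_iInter.1 hx)
      refine ⟨Q, hQP, hQ, card_biUnion_le.trans ?_⟩
      simpa using hcard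
  · rintro ⟨Q, hQP, ⟨x, hx⟩, -⟩
    exact ⟨x, Set.mem_iInter.2 fun j =>
      convexHull_mono (coe_subset.2 (hQP j)) (Set.mem_iInter.1 hx j)⟩

/-- **Pór's generalization of Kirchberger's theorem.** For pairwise disjoint finite sets
`P 0, …, P (r-1)` in `ℝ^d`, the convex hulls of all the `P j` have a common point iff
there are subsets `Q j ⊆ P j` whose convex hulls have a common point and whose union has
at most `(d+1)(r-1)+1` points. -/
theorem por (d r : ℕ) (hd : 0 < d) (hr : 0 < r)
    (P : Fin r → Finset (EuclideanSpace ℝ (Fin d)))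
    (hdisj : ∀ i j, i ≠ j → Disjoint (P i) (P j)) :
    (⋂ j, convexHull ℝ (P j : Set (EuclideanSpace ℝ (Fin d)))).Nonempty ↔
      ∃ Q : Fin r → Finset (EuclideanSpace ℝ (Fin d)),
        (∀ j, Q j ⊆ P j) ∧
        (⋂ j, convexHull ℝ (Q j : Set (EuclideanSpace ℝ (Fin d)))).Nonempty ∧
        (Finset.univ.biUnion Q).card ≤ (d + 1) * (r - 1) + 1 :=
  por_general d r P
end

section
/- Let n, r, d be positive integers and let S be a set of n points in ℝ^d. Assign to each point of S a label from {1, …, r} uniformly at random and independently, forming a random partition of S into at most r parts. Then the probability that this partition is a Tverberg partition of S into r parts whose degree in the Tverberg r-partition graph G_T[S,r] equals n(r-1) — that is, all r parts are nonempty, their convex hulls have a common point, and for every point x ∈ S and every label j different from the label of x, relabeling x with j again yields a Tverberg partition into r parts — is at least 1 - r^{(r-1)(d+1)} · n^{(r-1)(d+1)} · exp(-2(n-r)²/(n r²)). -/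
open Finset

/-- A labeling `f : S → Fin r` induces a Tverberg partition into `r` parts: every label
is used (all `r` parts are nonempty) and the convex hulls of the `r` parts have a common
point. -/
def IsTverbergLabeling {d r : ℕ} (S : Finset (EuclideanSpace ℝ (Fin d)))
    (f : S → Fin r) : Prop :=
  (∀ j : Fin r, ∃ x : S, f x = j) ∧
    (⋂ j : Fin r,
      convexHull ℝ (Subtype.val '' (f ⁻¹' {j}) : Set (EuclideanSpace ℝ (Fin d)))).Nonempty

/-- The labeling induces a Tverberg partition into `r` parts whose degree in the Tverberg
`r`-partition graph is the maximal value `n(r-1)`: relabeling any single point with any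
other label again yields a Tverberg partition into `r` parts. -/
def IsMaxDegreeTverbergLabeling {d r : ℕ} (S : Finset (EuclideanSpace ℝ (Fin d)))
    (f : S → Fin r) : Prop :=
  IsTverbergLabeling S f ∧
    ∀ (x : S) (j : Fin r), j ≠ f x → IsTverbergLabeling S (Function.update f x j)

/-!
A labeling `f` is not a Tverberg partition exactly when there are affine functionals
`c₁, …, c_r` on `ℝ^d` with `∑ c_j = 0` and `c_{f y}(y) ≤ -1` for every point `y`: separate the
product of the convex hulls from the diagonal (Hahn–Banach); an unused label is obstructed by
constants. Such obstructions form a polyhedron in a space of dimension `(r-1)(d+1)`, and a face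
of it is cut out by at most `(r-1)(d+1)` tight constraints `(y, f y)`; every functional on that
face is an obstruction, and it depends only on those pairs. As the `c_j` sum to zero, at each
point `y` some label `j` has `c_j(y) ≥ 0`, and `f` cannot use it. Hence every non-Tverberg
labeling disagrees everywhere with one of `(nr)^{(r-1)(d+1)}` fixed labelings, and a labeling of
non-maximal degree disagrees with one of them everywhere but at a single point. A union bound
leaves at most `(nr)^{(r-1)(d+1)} · n r (r-1)^{n-1}` bad labelings, and
`n (1 - 1/r)^{n-1} ≤ exp (-2(n-r)²/(nr²))` as soon as the claimed bound is positive.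
-/

open Module Real

lemma exists_subset_card_le_finrank_forall_eq_zero {K V ι : Type*} [Field K] [AddCommGroup V]
    [Module K V] [FiniteDimensional K V] [Finite ι] (g : ι → Dual K V) (A : Set ι) :
    ∃ T : Finset ι, ↑T ⊆ A ∧ #T ≤ finrank K V ∧
      ∀ v, (∀ i ∈ T, g i v = 0) → ∀ i ∈ A, g i v = 0 := by
  obtain ⟨b, hbA, -, hspan, hli⟩ :=
    exists_linearIndepOn_extension (linearIndepOn_empty K g) (Set.empty_subset A)
  refine ⟨(Set.toFinite b).toFinset, by simpa using hbA, ?_, fun v hv i hi => ?_⟩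
  · have := Fintype.ofFinite b
    have := (hli : LinearIndependent K fun j : b => g j).fintype_card_le_finrank
    rwa [Subspace.dual_finrank_eq, ← Set.Finite.card_toFinset (Set.toFinite b)] at this
  · have hker : g '' b ⊆ LinearMap.ker (Dual.eval K V v) := by
      rintro _ ⟨j, hj, rfl⟩
      simpa using hv j (by simpa using hj)
    simpa using Submodule.span_le.2 hker (hspan ⟨i, hi, rfl⟩)

lemma exists_fin_range_eq_of_card_le {ι : Type*} {s : Finset ι} (hs : s.Nonempty) {k : ℕ}
    (hk : #s ≤ k) : ∃ t : Fin k → ι, Set.range t = s := by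
  obtain ⟨t, ht⟩ := Function.exists_surjective_iff.2
    ⟨⟨fun _ => ⟨_, hs.choose_spec⟩⟩, ⟨s.equivFin.toEmbedding.trans (Fin.castLEEmb hk)⟩⟩
  exact ⟨Subtype.val ∘ t, by rw [Set.range_comp, ht.range_eq, Set.image_univ, Subtype.range_coe]⟩

lemma finrank_ker_sum_proj {K M : Type*} [Field K] [AddCommGroup M] [Module K M]
    [FiniteDimensional K M] {r : ℕ} (hr : 0 < r) :
    finrank K (LinearMap.ker (∑ j : Fin r, LinearMap.proj j : (Fin r → M) →ₗ[K] M)) =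
      (r - 1) * finrank K M := by
  have hsurj : LinearMap.range (∑ j : Fin r, LinearMap.proj j : (Fin r → M) →ₗ[K] M) = ⊤ :=
    LinearMap.range_eq_top.2 fun v => ⟨Pi.single ⟨0, hr⟩ v, by simp⟩
  have := LinearMap.finrank_range_add_finrank_ker
    (∑ j : Fin r, LinearMap.proj j : (Fin r → M) →ₗ[K] M)
  rw [hsurj, finrank_top, Module.finrank_pi_fintype, sum_const, card_univ, Fintype.card_fin,
    smul_eq_mul] at this
  rw [Nat.sub_one_mul]
  omega

section Polyhedron

lemma exists_first_exit {ι : Type*} [Finite ι] {p q : ι → ℝ} (hp : ∀ i, p i ≤ 0)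
    (hpq : ∀ i, p i = 0 → q i ≤ 0) (hq : ∃ i, 0 < q i) :
    ∃ t : ℝ, (∀ i, (1 - t) * p i + t * q i ≤ 0) ∧
      ∃ i, p i < 0 ∧ (1 - t) * p i + t * q i = 0 := by
  have hp_neg : ∀ i, 0 < q i → p i < 0 := fun i hi =>
    (hp i).lt_of_ne fun h => (hpq i h).not_gt hi
  obtain ⟨i₀, hi₀, hmin⟩ := Set.exists_min_image {i | 0 < q i} (fun i => p i / (p i - q i))
    (Set.toFinite _) hq
  have hd₀ : p i₀ - q i₀ < 0 := by linarith [hp_neg i₀ hi₀, show 0 < q i₀ from hi₀]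
  refine ⟨p i₀ / (p i₀ - q i₀), fun i => ?_, i₀, hp_neg i₀ hi₀, by field_simp [hd₀.ne]; ring⟩
  rcases le_or_gt (q i) 0 with hqi | hqi
  · have ht1 : p i₀ / (p i₀ - q i₀) ≤ 1 := by
      rw [div_le_one_of_neg hd₀]; linarith [show 0 < q i₀ from hi₀]
    nlinarith [hp i, div_nonneg_of_nonpos (hp i₀) hd₀.le]
  · have hd : p i - q i < 0 := by linarith [hp_neg i hqi]
    have := (le_div_iff_of_neg hd).1 (hmin i hqi)
    linarith

variable {V ι : Type*} [AddCommGroup V] [Module ℝ V] [Finite ι] (g : ι → Dual ℝ V)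
  (c : ι → ℝ)

lemma forall_apply_le_of_tight_max {x z : V} (hx : ∀ i, g i x ≤ c i)
    (hmax : ∀ y, (∀ i, g i y ≤ c i) → {i | g i y = c i}.ncard ≤ {i | g i x = c i}.ncard)
    (hz : ∀ i, g i x = c i → g i z = c i) : ∀ i, g i z ≤ c i := by
  by_contra! hviol
  obtain ⟨i₁, hi₁⟩ := hviol
  -- walking from `x` towards `z`, the first constraint to become tight gives a feasible point
  -- with more tight constraints than `x`
  obtain ⟨t, hle, i₀, hi₀, hi₀t⟩ := exists_first_exit (p := fun i => g i x - c i)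
    (q := fun i => g i z - c i) (fun i => sub_nonpos.2 (hx i))
    (fun i hi => (sub_eq_zero.2 (hz i (sub_eq_zero.1 hi))).le) ⟨i₁, sub_pos.2 hi₁⟩
  have hy : ∀ i, g i (x + t • (z - x)) - c i = (1 - t) * (g i x - c i) + t * (g i z - c i) := by
    intro i; simp only [map_add, map_smul, map_sub, smul_eq_mul]; ring
  have htight : {i | g i x = c i} ⊂ {i | g i (x + t • (z - x)) = c i} := by
    refine (Set.ssubset_iff_of_subset fun i hi => ?_).2 ⟨i₀, ?_, fun h => hi₀.ne (sub_eq_zero.2 h)⟩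
    · have := hy i
      rw [show g i x = c i from hi, hz i hi, sub_self, mul_zero, mul_zero, add_zero] at this
      exact sub_eq_zero.1 this
    · exact sub_eq_zero.1 ((hy i₀).trans hi₀t)
  exact (Set.ncard_lt_ncard htight).not_ge
    (hmax _ fun i => sub_nonpos.1 ((hy i).trans_le (hle i)))

/-- A minimal face of a nonempty polyhedron is an affine subspace, cut out by at most
`finrank ℝ V` of the defining constraints. -/
theorem exists_finset_card_le_finrank_subset_polyhedron [FiniteDimensional ℝ V]
    (h : ∃ x, ∀ i, g i x ≤ c i) :
    ∃ T : Finset ι, #T ≤ finrank ℝ V ∧ (∃ x, ∀ i ∈ T, g i x = c i) ∧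
      ∀ z, (∀ i ∈ T, g i z = c i) → ∀ i, g i z ≤ c i := by
  obtain ⟨_, ⟨x, hx, rfl⟩, hmax⟩ := Set.exists_max_image
    ((fun y => {i | g i y = c i}) '' {y | ∀ i, g i y ≤ c i}) Set.ncard (Set.toFinite _)
    (Set.Nonempty.image _ h)
  obtain ⟨T, hTx, hTcard, hT⟩ := exists_subset_card_le_finrank_forall_eq_zero g {i | g i x = c i}
  refine ⟨T, hTcard, ⟨x, fun i hi => hTx hi⟩, fun z hz => forall_apply_le_of_tight_max g c hx
    (fun y hy => hmax _ ⟨y, hy, rfl⟩) fun i hi => ?_⟩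
  have := hT (z - x) (fun j hj => by rw [map_sub, hz j hj, hTx hj, sub_self]) i hi
  rwa [map_sub, sub_eq_zero, hi] at this

end Polyhedron

section Obstruction

variable {F ι : Type*} [AddCommGroup F] [Module ℝ F] {r : ℕ}

/-- The `c j` encode affine functionals, as linear functionals on `F` evaluated at the lifted
points `p i` (below, `F = ℝ^d × ℝ` and `p y = (y, 1)`). Since they sum to zero, no point of `F`
satisfies `c j ≤ -1` for all `j`, so the convex hulls of the classes of `f` have no common
point. -/
def IsTverbergObstruction (p : ι → F) (f : ι → Fin r) (c : Fin r → Dual ℝ F) : Prop :=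
  ∑ j, c j = 0 ∧ ∀ i, c (f i) (p i) ≤ -1

def tightObstructions {k : ℕ} (p : ι → F) (w : Fin k → ι × Fin r) :
    Set (Fin r → Dual ℝ F) :=
  {c | ∑ j, c j = 0 ∧ ∀ m, c (w m).2 (p (w m).1) = -1}

lemma exists_nonneg_apply_of_sum_eq_zero (hr : 0 < r) {c : Fin r → Dual ℝ F}
    (hc : ∑ j, c j = 0) (v : F) : ∃ j, 0 ≤ c j v := by
  obtain ⟨j, -, hj⟩ := exists_le_of_sum_le (s := univ) (f := fun _ => (0 : ℝ))
    (g := fun j => c j v) ⟨⟨0, hr⟩, mem_univ _⟩ (by simp [← LinearMap.sum_apply, hc])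
  exact ⟨j, hj⟩

lemma exists_tightObstructions_subset [FiniteDimensional ℝ F] [Finite ι] [Nonempty ι]
    (hr : 0 < r) (p : ι → F) (f : ι → Fin r) (h : ∃ c, IsTverbergObstruction p f c) {k : ℕ}
    (hk : (r - 1) * finrank ℝ F ≤ k) :
    ∃ w : Fin k → ι × Fin r, (tightObstructions p w).Nonempty ∧
      ∀ c ∈ tightObstructions p w, IsTverbergObstruction p f c := by
  set U := LinearMap.ker
    (∑ j : Fin r, LinearMap.proj j : (Fin r → Dual ℝ F) →ₗ[ℝ] Dual ℝ F)
  have hU : ∀ c, c ∈ U ↔ ∑ j, c j = 0 := fun c => by simp [U]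
  let G (i : ι) : Dual ℝ U :=
    Dual.eval ℝ F (p i) ∘ₗ LinearMap.proj (f i) ∘ₗ U.subtype
  obtain ⟨c, hc_sum, hc⟩ := h
  obtain ⟨T, hTcard, ⟨c₀, hc₀⟩, hT⟩ :=
    exists_finset_card_le_finrank_subset_polyhedron (V := U) G (fun _ => -1)
      ⟨⟨c, (hU c).2 hc_sum⟩, hc⟩
  have hTne : T.Nonempty := by
    rw [nonempty_iff_ne_empty]
    rintro rfl
    have := hT 0 (by simp) (Classical.arbitrary ι)
    norm_num [G] at this
  rw [finrank_ker_sum_proj hr, Subspace.dual_finrank_eq] at hTcard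
  obtain ⟨t, ht⟩ := exists_fin_range_eq_of_card_le hTne (hTcard.trans hk)
  have hmem : ∀ m, t m ∈ T := fun m => by rw [← mem_coe, ← ht]; exact ⟨m, rfl⟩
  refine ⟨fun m => (t m, f (t m)), ⟨c₀, (hU _).1 c₀.2, fun m => hc₀ _ (hmem m)⟩,
    fun c' ⟨hc'_sum, hc'⟩ => ⟨hc'_sum, hT ⟨c', (hU _).2 hc'_sum⟩ fun i hi => ?_⟩⟩
  obtain ⟨m, rfl⟩ : i ∈ Set.range t := ht ▸ hi
  exact hc' m

lemma exists_forall_ne_of_isTverbergObstruction [FiniteDimensional ℝ F] [Finite ι] [Nonempty ι]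
    (hr : 0 < r) (p : ι → F) {k : ℕ} (hk : (r - 1) * finrank ℝ F ≤ k) :
    ∃ φ : (Fin k → ι × Fin r) → ι → Fin r,
      ∀ f : ι → Fin r, (∃ c, IsTverbergObstruction p f c) → ∃ w, ∀ i, f i ≠ φ w i := by
  have hchoice : ∀ w : Fin k → ι × Fin r, ∃ g : ι → Fin r,
      (tightObstructions p w).Nonempty → ∃ c ∈ tightObstructions p w, ∀ i, 0 ≤ c (g i) (p i) := by
    intro w
    by_cases hZ : (tightObstructions p w).Nonempty
    · obtain ⟨c, hc⟩ := hZ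
      choose g hg using fun i => exists_nonneg_apply_of_sum_eq_zero hr hc.1 (p i)
      exact ⟨g, fun _ => ⟨c, hc, hg⟩⟩
    · exact ⟨fun _ => ⟨0, hr⟩, fun h => absurd h hZ⟩
  choose φ hφ using hchoice
  refine ⟨φ, fun f hf => ?_⟩
  obtain ⟨w, hZ, hobs⟩ := exists_tightObstructions_subset hr p f hf hk
  obtain ⟨c, hc, hc_nonneg⟩ := hφ w hZ
  refine ⟨w, fun i hfi => ?_⟩
  have := (hobs c hc).2 i
  rw [hfi] at this
  linarith [hc_nonneg i]

end Obstruction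

lemma apply_eq_zero_of_forall_lt_apply {M F : Type*} [AddCommGroup M] [Module ℝ M]
    [FunLike F M ℝ] [LinearMapClass F ℝ M ℝ] {D : Submodule ℝ M} {φ : F} {v : ℝ}
    (h : ∀ y ∈ D, v < φ y) {y : M} (hy : y ∈ D) : φ y = 0 := by
  by_contra hne
  have := h _ (D.smul_mem ((v - 1) / φ y) hy)
  rw [map_smul, smul_eq_mul, div_mul_cancel₀ _ hne] at this
  linarith

section Separation

variable {E : Type*} [NormedAddCommGroup E] [NormedSpace ℝ E] [FiniteDimensional ℝ E] {r : ℕ}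

lemma exists_sum_eq_zero_sum_apply_neg_of_iInter_eq_empty (K : Fin r → Set E)
    (hK : ∀ j, IsCompact (K j)) (hKc : ∀ j, Convex ℝ (K j)) (h : ⋂ j, K j = ∅) :
    ∃ a : Fin r → StrongDual ℝ E, ∑ j, a j = 0 ∧ ∀ z ∈ Set.univ.pi K, ∑ j, a j (z j) < 0 := by
  let D : Submodule ℝ (Fin r → E) := LinearMap.range (LinearMap.pi fun _ => LinearMap.id)
  have hdisj : Disjoint (Set.univ.pi K) (D : Set (Fin r → E)) := by
    rw [Set.disjoint_left]
    rintro _ hx ⟨y, rfl⟩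
    have : y ∈ ⋂ j, K j := Set.mem_iInter.2 fun j => hx j (Set.mem_univ j)
    simp [h] at this
  obtain ⟨φ, u, v, hφK, huv, hφD⟩ := geometric_hahn_banach_compact_closed
    (convex_pi fun j _ => hKc j) (isCompact_univ_pi hK) D.convex D.closed_of_finiteDimensional
    hdisj
  have hφD0 : ∀ y ∈ D, φ y = 0 := fun y hy => apply_eq_zero_of_forall_lt_apply hφD hy
  have hv : v < 0 := by simpa using hφD 0 D.zero_mem
  let a (j : Fin r) : StrongDual ℝ E := φ.comp (ContinuousLinearMap.single ℝ (fun _ => E) j)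
  have hφ_sum : ∀ z, φ z = ∑ j, a j (z j) := fun z => by
    conv_lhs => rw [← Finset.univ_sum_single z]
    simp [a]
  refine ⟨a, ContinuousLinearMap.ext fun x => ?_, fun z hz => ?_⟩
  · have := hφD0 (fun _ => x) ⟨x, rfl⟩
    rw [hφ_sum] at this
    simpa using this
  · linarith [hφ_sum z, hφK z hz]

theorem exists_sum_eq_zero_apply_le_neg_one_of_iInter_eq_empty (K : Fin r → Set E)
    (hK : ∀ j, IsCompact (K j)) (hKc : ∀ j, Convex ℝ (K j)) (hKne : ∀ j, (K j).Nonempty)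
    (h : ⋂ j, K j = ∅) :
    ∃ c : Fin r → Dual ℝ (E × ℝ), ∑ j, c j = 0 ∧ ∀ j, ∀ x ∈ K j, c j (x, 1) ≤ -1 := by
  obtain ⟨a, ha_sum, ha_neg⟩ := exists_sum_eq_zero_sum_apply_neg_of_iInter_eq_empty K hK hKc h
  have ha_sum' : ∀ x, ∑ j, a j x = 0 := fun x => by simpa using DFunLike.congr_fun ha_sum x
  choose m hmK hmax using fun j => (hK j).exists_isMaxOn (hKne j) (a j).continuous.continuousOn
  have hgap : ∑ j, a j (m j) < 0 := ha_neg m fun j _ => hmK j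
  have hr : 0 < r := Nat.pos_of_ne_zero (by rintro rfl; simp at hgap)
  -- `t` rescales the gaps `a j (m j)` so that the constants `t * a j (m j) + 1` sum to zero
  set t := -(r : ℝ) / ∑ j, a j (m j) with ht
  have ht_pos : 0 < t := div_pos_of_neg_of_neg (neg_neg_of_pos (Nat.cast_pos.2 hr)) hgap
  refine ⟨fun j => t • ((a j : E →ₗ[ℝ] ℝ) ∘ₗ LinearMap.fst ℝ E ℝ) -
    (t * a j (m j) + 1) • LinearMap.snd ℝ E ℝ, ?_, fun j x hx => ?_⟩
  · ext x
    · simp [← Finset.mul_sum, ha_sum']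
    · simp [Finset.sum_add_distrib, ← Finset.mul_sum, ht, hgap.ne]
  · have : a j x ≤ a j (m j) := hmax j hx
    simp only [LinearMap.sub_apply, LinearMap.smul_apply, LinearMap.coe_comp,
      ContinuousLinearMap.coe_coe, Function.comp_apply, LinearMap.fst_apply, LinearMap.snd_apply,
      smul_eq_mul, mul_one]
    nlinarith

end Separation

lemma exists_obstruction_of_not_isTverbergLabeling {d r : ℕ}
    {S : Finset (EuclideanSpace ℝ (Fin d))} {f : S → Fin r} (hf : ¬ IsTverbergLabeling S f) :
    ∃ c, IsTverbergObstruction (fun y : S => ((y : EuclideanSpace ℝ (Fin d)), (1 : ℝ))) f c := by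
  by_cases hsurj : ∀ j, ∃ y, f y = j
  · obtain ⟨c, hc, hcK⟩ := exists_sum_eq_zero_apply_le_neg_one_of_iInter_eq_empty
      (fun j => convexHull ℝ (Subtype.val '' (f ⁻¹' {j}) : Set (EuclideanSpace ℝ (Fin d))))
      (fun j => (Set.toFinite _).isCompact_convexHull ℝ) (fun j => convex_convexHull ℝ _)
      (fun j => by obtain ⟨y, hy⟩ := hsurj j; exact ⟨y, subset_convexHull ℝ _ ⟨y, hy, rfl⟩⟩)
      (Set.not_nonempty_iff_eq_empty.1 fun hne => hf ⟨hsurj, hne⟩)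
    exact ⟨c, hc, fun y => hcK (f y) y (subset_convexHull ℝ _ ⟨y, rfl, rfl⟩)⟩
  · push Not at hsurj
    obtain ⟨j₀, hj₀⟩ := hsurj
    refine ⟨fun j => ((r : ℝ) * (Pi.single j₀ 1 : Fin r → ℝ) j - 1) • LinearMap.snd ℝ _ ℝ, ?_,
      fun y => ?_⟩
    · rw [← Finset.sum_smul, Finset.sum_sub_distrib, ← Finset.mul_sum, Finset.sum_pi_single']
      simp
    · simp [hj₀ y]

lemma exists_forall_ne_of_not_isTverbergLabeling {d r : ℕ} (hr : 0 < r)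
    (S : Finset (EuclideanSpace ℝ (Fin d))) (hS : S.Nonempty) :
    ∃ φ : (Fin ((r - 1) * (d + 1)) → S × Fin r) → S → Fin r,
      ∀ f, ¬ IsTverbergLabeling S f → ∃ w, ∀ y, f y ≠ φ w y := by
  have : Nonempty S := hS.to_subtype
  obtain ⟨φ, hφ⟩ := exists_forall_ne_of_isTverbergObstruction hr
    (fun y : S => ((y : EuclideanSpace ℝ (Fin d)), (1 : ℝ))) (k := (r - 1) * (d + 1)) (by simp)
  exact ⟨φ, fun f hf => hφ f (exists_obstruction_of_not_isTverbergLabeling hf)⟩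

section Counting

variable {α : Type*} [Fintype α] [DecidableEq α] {r : ℕ}

def disagreeOff (g : α → Fin r) (x : α) : Finset (α → Fin r) :=
  Fintype.piFinset (Function.update (fun y => univ.erase (g y)) x univ)

lemma mem_disagreeOff {g f : α → Fin r} {x : α} :
    f ∈ disagreeOff g x ↔ ∀ y, y ≠ x → f y ≠ g y := by
  simp only [disagreeOff, Fintype.mem_piFinset]
  refine forall_congr' fun y => ?_
  rcases eq_or_ne y x with rfl | hy <;> simp [*]

lemma card_disagreeOff (g : α → Fin r) (x : α) :
    #(disagreeOff g x) = r * (r - 1) ^ (Fintype.card α - 1) := by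
  rw [disagreeOff, Fintype.card_piFinset, ← Finset.mul_prod_erase univ _ (mem_univ x)]
  have hcard : ∀ y ∈ univ.erase x,
      #(Function.update (fun y => univ.erase (g y)) x univ y) = r - 1 := fun y hy => by
    rw [Function.update_of_ne (ne_of_mem_erase hy), card_erase_of_mem (mem_univ _), card_fin]
  rw [Function.update_self, card_fin, prod_congr rfl hcard, prod_const,
    card_erase_of_mem (mem_univ x), card_univ]

lemma ncard_not_forall_update_le [Nonempty α] {C : Type*} [Fintype C]
    (P : (α → Fin r) → Prop) (φ : C → α → Fin r) (hφ : ∀ f, ¬ P f → ∃ c, ∀ y, f y ≠ φ c y) :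
    {f : α → Fin r | ¬ (P f ∧ ∀ x j, j ≠ f x → P (Function.update f x j))}.ncard ≤
      Fintype.card C * (Fintype.card α * r * (r - 1) ^ (Fintype.card α - 1)) := by
  have hcover : {f : α → Fin r | ¬ (P f ∧ ∀ x j, j ≠ f x → P (Function.update f x j))} ⊆
      ↑((univ : Finset (C × α)).biUnion fun cx => disagreeOff (φ cx.1) cx.2) := by
    intro f hf
    simp only [coe_biUnion, coe_univ, Set.mem_univ, Set.iUnion_true, Set.mem_iUnion, mem_coe,
      mem_disagreeOff, Prod.exists]
    by_cases hPf : P f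
    · obtain ⟨x, j, -, hPu⟩ : ∃ x j, j ≠ f x ∧ ¬ P (Function.update f x j) := by
        simpa [hPf] using hf
      obtain ⟨c, hc⟩ := hφ _ hPu
      exact ⟨c, x, fun y hy => by simpa [Function.update_of_ne hy] using hc y⟩
    · obtain ⟨c, hc⟩ := hφ f hPf
      exact ⟨c, Classical.arbitrary α, fun y _ => hc y⟩
  calc _ ≤ #((univ : Finset (C × α)).biUnion fun cx => disagreeOff (φ cx.1) cx.2) := by
        rw [← Set.ncard_coe_finset]; exact Set.ncard_le_ncard hcover
    _ ≤ ∑ cx : C × α, #(disagreeOff (φ cx.1) cx.2) := card_biUnion_le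
    _ = _ := by simp [card_disagreeOff, mul_assoc]

end Counting

-- For `r ≥ 3` the estimate `1 / r ≤ log (r / (r - 1))` suffices; for `r = 2` it does not, and
-- `log 2 > 5 / 8` is needed.
lemma log_add_le_mul_log_div_of_eq_two {N R : ℝ} (hN : 1 ≤ N) (hR : R = 2)
    (h : 2 * (R - 1) * log (N * R) < 2 * (N - R) ^ 2 / (N * R ^ 2)) :
    log N + 2 * (N - R) ^ 2 / (N * R ^ 2) ≤ (N - 1) * log (R / (R - 1)) := by
  subst hR
  norm_num at h ⊢
  have hN0 : 0 < N := by linarith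
  have hx : 2 * (N - 2) ^ 2 / (N * 4) = N / 2 - 2 + 2 / N := by field_simp; ring
  have hlog2 := log_two_gt_d9
  have hlog2' := log_two_lt_d9
  have h5 : 5 ≤ N := by
    by_contra! hN5
    have hx_le : 2 * (N - 2) ^ 2 / (N * 4) ≤ 9 / 10 := by
      rw [div_le_iff₀ (by positivity)]; nlinarith
    have : log 2 ≤ log (N * 2) := log_le_log (by norm_num) (by linarith)
    linarith
  have hlogN : log N ≤ N / 8 + 3 * log 2 - 1 := by
    have h8 := log_le_sub_one_of_pos (show 0 < N / 8 by positivity)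
    rw [log_div hN0.ne' (by norm_num), show (8 : ℝ) = 2 ^ 3 by norm_num, log_pow] at h8
    push_cast at h8
    linarith
  have hinv : 2 / N ≤ 2 / 5 := div_le_div_of_nonneg_left (by norm_num) (by norm_num) h5
  rw [hx]
  nlinarith

lemma log_add_le_mul_log_div_of_three_le {N R : ℝ} (hN : 1 ≤ N) (hR : 3 ≤ R)
    (h : 2 * (R - 1) * log (N * R) < 2 * (N - R) ^ 2 / (N * R ^ 2)) :
    log N + 2 * (N - R) ^ 2 / (N * R ^ 2) ≤ (N - 1) * log (R / (R - 1)) := by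
  set x := 2 * (N - R) ^ 2 / (N * R ^ 2) with hx_def
  have hN0 : 0 < N := by linarith
  have hR0 : 0 < R := by linarith
  have hlogNR : log N + log R = log (N * R) := (log_mul hN0.ne' hR0.ne').symm
  have hlogR : 1 < log R := by
    rw [lt_log_iff_exp_lt hR0]
    linarith [exp_one_lt_d9]
  have hNR : R < N := by
    by_contra! hNR
    have : x ≤ 2 := by
      rw [hx_def, div_le_iff₀ (by positivity)]
      nlinarith
    nlinarith [log_nonneg hN]
  have hlogN : log N ≤ x / 4 := by
    nlinarith [log_nonneg hN]
  have hlog_div : 1 / R ≤ log (R / (R - 1)) := by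
    have := one_sub_inv_le_log_of_pos (show 0 < R / (R - 1) by
      apply div_pos hR0; linarith)
    rw [inv_div] at this
    have e : 1 - (R - 1) / R = 1 / R := by field_simp; ring
    linarith
  have hgap : (N - 1) * (1 / R) - 5 / 4 * x
      = (N ^ 2 * (2 * R - 5) + 8 * N * R - 5 * R ^ 2) / (2 * N * R ^ 2) := by
    rw [hx_def]; field_simp; ring
  have hgap_nonneg : 0 ≤ (N ^ 2 * (2 * R - 5) + 8 * N * R - 5 * R ^ 2) / (2 * N * R ^ 2) := by
    apply div_nonneg _ (by positivity)
    nlinarith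
  calc log N + x ≤ 5 / 4 * x := by linarith
    _ ≤ (N - 1) * (1 / R) := by linarith
    _ ≤ (N - 1) * log (R / (R - 1)) := by gcongr

lemma natCast_mul_pow_le_of_lt_exp {n r k : ℕ} (hn : 0 < n) (hr : 0 < r) (hk : 2 * (r - 1) ≤ k)
    (h : ((n : ℝ) * r) ^ k < exp (2 * ((n : ℝ) - r) ^ 2 / (n * r ^ 2))) :
    ((n * r * (r - 1) ^ (n - 1) : ℕ) : ℝ) ≤ r ^ n * exp (-2 * ((n : ℝ) - r) ^ 2 / (n * r ^ 2)) := by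
  obtain rfl | hr2 : r = 1 ∨ 2 ≤ r := by omega
  · obtain rfl | hn2 : n = 1 ∨ 2 ≤ n := by omega
    · norm_num at h
    · rw [Nat.sub_self, zero_pow (by omega), mul_zero, Nat.cast_zero]
      positivity
  set x := 2 * ((n : ℝ) - r) ^ 2 / (n * r ^ 2) with hx
  have hN : (1 : ℝ) ≤ n := by exact_mod_cast hn
  have hR : (2 : ℝ) ≤ r := by exact_mod_cast hr2
  have hr_sub : ((r - 1 : ℕ) : ℝ) = r - 1 := by rw [Nat.cast_sub (by omega), Nat.cast_one]
  have hk_log : 2 * ((r : ℝ) - 1) * log (n * r) < x := by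
    have hlt := log_lt_log (by positivity) h
    rw [log_pow, log_exp] at hlt
    have hk' : 2 * ((r : ℝ) - 1) ≤ k := by rw [← hr_sub]; exact_mod_cast hk
    nlinarith [log_nonneg (show (1 : ℝ) ≤ n * r by nlinarith)]
  have hlog : log n + x ≤ (n - 1) * log (r / (r - 1)) := by
    obtain rfl | hr3 : r = 2 ∨ 3 ≤ r := by omega
    · exact log_add_le_mul_log_div_of_eq_two hN (by norm_num) hk_log
    · exact log_add_le_mul_log_div_of_three_le hN (by exact_mod_cast hr3) hk_log
  have hexp : n * exp x ≤ (r / (r - 1)) ^ (n - 1) := by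
    have := exp_le_exp.mpr hlog
    rwa [exp_add, exp_log (by positivity), ← Nat.cast_pred hn, ← log_pow,
      exp_log (by apply pow_pos; apply div_pos <;> linarith)] at this
  have hmul : n * r * (r - 1) ^ (n - 1) * exp x ≤ (r : ℝ) ^ n := by
    calc n * r * (r - 1) ^ (n - 1) * exp x = (n * exp x) * (r - 1) ^ (n - 1) * r := by ring
      _ ≤ (r / (r - 1)) ^ (n - 1) * (r - 1) ^ (n - 1) * r := by
        gcongr
        exact pow_nonneg (by linarith) _
      _ = r ^ n := by
        rw [← mul_pow, div_mul_cancel₀ _ (by linarith), ← pow_succ, Nat.sub_add_cancel hn]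
  rw [show -2 * ((n : ℝ) - r) ^ 2 / (n * r ^ 2) = -x by rw [hx]; ring, exp_neg,
    ← div_eq_mul_inv, le_div_iff₀ (exp_pos x)]
  push_cast [hr_sub]
  exact hmul

lemma one_sub_le_div_of_card_le {n r k G B : ℕ} (hn : 0 < n) (hr : 0 < r) (hk : 2 * (r - 1) ≤ k)
    (hGB : G + B = r ^ n) (hB : B ≤ (n * r) ^ k * (n * r * (r - 1) ^ (n - 1))) :
    1 - (r : ℝ) ^ k * (n : ℝ) ^ k * exp (-2 * ((n : ℝ) - r) ^ 2 / (n * r ^ 2)) ≤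
      (G : ℝ) / r ^ n := by
  have hrn : (0 : ℝ) < r ^ n := by positivity
  have hG : (G : ℝ) / r ^ n = 1 - B / r ^ n := by
    rw [eq_sub_iff_add_eq, ← add_div, div_eq_one_iff_eq hrn.ne']
    exact_mod_cast hGB
  rw [hG, sub_le_sub_iff_left, div_le_iff₀ hrn]
  by_cases htriv : 1 ≤ (r : ℝ) ^ k * n ^ k * exp (-2 * ((n : ℝ) - r) ^ 2 / (n * r ^ 2))
  · calc (B : ℝ) ≤ r ^ n := by exact_mod_cast hGB ▸ Nat.le_add_left B G
      _ ≤ _ := le_mul_of_one_le_left hrn.le htriv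
  · have hlt : ((n : ℝ) * r) ^ k < exp (2 * ((n : ℝ) - r) ^ 2 / (n * r ^ 2)) := by
      rw [not_le, show -2 * ((n : ℝ) - r) ^ 2 / (n * r ^ 2) = -(2 * ((n : ℝ) - r) ^ 2 / (n * r ^ 2))
        by ring, exp_neg, ← div_eq_mul_inv, div_lt_one (exp_pos _)] at htriv
      rwa [mul_pow, mul_comm]
    calc (B : ℝ) ≤ (n * r) ^ k * ((n * r * (r - 1) ^ (n - 1) : ℕ) : ℝ) := by exact_mod_cast hB
      _ ≤ (n * r) ^ k * (r ^ n * exp (-2 * ((n : ℝ) - r) ^ 2 / (n * r ^ 2))) := by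
        gcongr
        exact natCast_mul_pow_le_of_lt_exp hn hr hk hlt
      _ = _ := by ring

/-- If each of the `n` points of `S ⊂ ℝ^d` is assigned one of `r` labels uniformly and
independently, the probability that the resulting partition is a Tverberg partition into
`r` parts of maximal degree `n(r-1)` in the Tverberg graph is at least
`1 - r^{(r-1)(d+1)} n^{(r-1)(d+1)} exp(-2(n-r)²/(nr²))`. -/
theorem random_labeling_tverberg (d r n : ℕ) (hd : 0 < d) (hr : 0 < r) (hn : 0 < n)
    (S : Finset (EuclideanSpace ℝ (Fin d))) (hS : S.card = n) :
    1 - (r : ℝ) ^ ((r - 1) * (d + 1)) * (n : ℝ) ^ ((r - 1) * (d + 1)) *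
        Real.exp (-2 * ((n : ℝ) - (r : ℝ)) ^ 2 / ((n : ℝ) * (r : ℝ) ^ 2)) ≤
      ({f : S → Fin r | IsMaxDegreeTverbergLabeling S f}.ncard : ℝ) / (r : ℝ) ^ n := by
  have hSne : S.Nonempty := card_pos.1 (hS ▸ hn)
  have : Nonempty S := hSne.to_subtype
  have hcard : Fintype.card S = n := by rw [Fintype.card_coe, hS]
  obtain ⟨φ, hφ⟩ := exists_forall_ne_of_not_isTverbergLabeling hr S hSne
  have hbad := ncard_not_forall_update_le (IsTverbergLabeling S) φ hφ
  simp only [Fintype.card_fun, Fintype.card_prod, Fintype.card_fin, hcard] at hbad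
  refine one_sub_le_div_of_card_le hn hr ?_ ?_ hbad
  · rw [mul_comm 2]; exact Nat.mul_le_mul_left _ (by omega)
  · have := Set.ncard_add_ncard_compl {f : S → Fin r | IsMaxDegreeTverbergLabeling S f}
    rwa [Nat.card_eq_fintype_card, Fintype.card_fun, Fintype.card_fin, hcard] at this
end

section
/- Let S be a finite set with n elements and let r be a positive integer with n ≥ r. Then the r-partition graph G[S,r] is connected. -/
open Finset

/-- The parts of a partition after removing the point `x`, discarding empty parts. -/
def eraseParts {α : Type*} [DecidableEq α] (parts : Finset (Finset α)) (x : α) :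
    Finset (Finset α) :=
  (parts.image fun t => t.erase x).filter fun t => t.Nonempty

/-- The `r`-partition graph of a finite set `S`: vertices are the partitions of `S`
into exactly `r` nonempty parts, and two partitions are adjacent iff their partition
distance is `1`, i.e. there is exactly one element `x ∈ S` whose removal makes the two
partitions agree on `S \ {x}`. -/
def partitionGraph {α : Type*} [DecidableEq α] (S : Finset α) (r : ℕ) :
    SimpleGraph {P : Finpartition S // P.parts.card = r} where
  Adj P Q := P ≠ Q ∧ ∃! x, x ∈ S ∧ eraseParts P.1.parts x = eraseParts Q.1.parts x
  symm := by
    constructor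
    rintro P Q ⟨hne, x, ⟨hx1, hx2⟩, hu⟩
    exact ⟨hne.symm, x, ⟨hx1, hx2.symm⟩, fun y hy => hu y ⟨hy.1, hy.2.symm⟩⟩
  loopless := by constructor; rintro P ⟨h, -⟩; exact h rfl

/-!
Every vertex is joined to the partition `C` into the singletons `{t}`, `t ∈ T`, and the block
`S \ T`, where `b ∈ S` is fixed and `T ⊆ S \ {b}` has `r - 1` elements. The only edges used move
a point `x` whose part has another element into another existing part: the number of parts is
kept, and `x` is the only point whose removal makes the two partitions agree. Partitions are
written as the fibres of a labelling `g`, so that such a move is `update g x (g w)`.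
Moving points of parts `∌ b` of size `≥ 2` into the part of `b` reaches a partition whose other
parts are singletons `{d}`, `d ∈ D`; two moves exchange an element of `D` for one of `T`, and
`|D \ T|` such exchanges reach `C`.
-/

open Function

namespace Finpartition

variable {α β : Type*} [DecidableEq α] [DecidableEq β] {s : Finset α}

lemma mem_parts_iff_exists_part_eq (P : Finpartition s) {t : Finset α} :
    t ∈ P.parts ↔ ∃ a ∈ s, P.part a = t :=
  ⟨fun ht => P.part_surjOn ht, by rintro ⟨a, ha, rfl⟩; exact P.part_mem.2 ha⟩

lemma ext_part {P Q : Finpartition s} (h : ∀ a ∈ s, P.part a = Q.part a) : P = Q := by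
  ext t
  simp only [mem_parts_iff_exists_part_eq]
  exact exists_congr fun a => and_congr_right fun ha => by rw [h a ha]

def ofFibers (s : Finset α) (f : α → β) : Finpartition s :=
  @ofSetSetoid α _ (Setoid.ker f) s fun a b => decEq (f a) (f b)

lemma mem_part_ofFibers {f : α → β} {a b : α} :
    b ∈ (ofFibers s f).part a ↔ a ∈ s ∧ b ∈ s ∧ f a = f b :=
  mem_part_ofSetSetoid_iff_rel s

lemma card_parts_ofFibers (f : α → β) : #(ofFibers s f).parts = #(s.image f) := by
  have : (ofFibers s f).parts = (s.image f).image fun c => {b ∈ s | c = f b} := by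
    rw [image_image]; rfl
  rw [this]
  refine card_image_of_injOn fun c hc c' _ hcc' => ?_
  obtain ⟨a, ha, rfl⟩ := mem_image.1 hc
  have : a ∈ {b ∈ s | f a = f b} := mem_filter.2 ⟨ha, rfl⟩
  exact (mem_filter.1 (hcc' ▸ this)).2.symm

lemma ofFibers_congr {f : α → β} {γ : Type*} [DecidableEq γ] {g : α → γ}
    (h : ∀ a ∈ s, ∀ b ∈ s, f a = f b ↔ g a = g b) : ofFibers s f = ofFibers s g :=
  ext_part fun a _ => by
    ext b
    simp only [mem_part_ofFibers]
    exact ⟨fun ⟨ha, hb, hab⟩ => ⟨ha, hb, (h a ha b hb).1 hab⟩,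
      fun ⟨ha, hb, hab⟩ => ⟨ha, hb, (h a ha b hb).2 hab⟩⟩

lemma ofFibers_part (P : Finpartition s) : ofFibers s P.part = P :=
  ext_part fun a ha => by
    ext b
    rw [mem_part_ofFibers]
    exact ⟨fun ⟨_, hb, hab⟩ => (P.mem_part_iff_part_eq_part hb ha).2 hab.symm,
      fun hb => have hbs := P.part_subset a hb
        ⟨ha, hbs, ((P.mem_part_iff_part_eq_part hbs ha).1 hb).symm⟩⟩

end Finpartition

section EraseParts

variable {α : Type*} [DecidableEq α] {s : Finset α}

lemma eraseParts_parts_eq_image (P : Finpartition s) (y : α) :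
    eraseParts P.parts y = (s.erase y).image fun a => (P.part a).erase y := by
  ext A
  simp only [eraseParts, mem_filter, mem_image, mem_erase]
  constructor
  · rintro ⟨⟨W, hW, rfl⟩, a, ha⟩
    obtain ⟨hay, haW⟩ := mem_erase.1 ha
    exact ⟨a, ⟨hay, P.le hW haW⟩, by rw [P.part_eq_of_mem hW haW]⟩
  · rintro ⟨a, ⟨hay, ha⟩, rfl⟩
    exact ⟨⟨_, P.part_mem.2 ha, rfl⟩, a, mem_erase.2 ⟨hay, P.mem_part ha⟩⟩

lemma eraseParts_eq_iff {P Q : Finpartition s} {y : α} :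
    eraseParts P.parts y = eraseParts Q.parts y ↔
      ∀ a ∈ s, a ≠ y → (P.part a).erase y = (Q.part a).erase y := by
  refine ⟨fun h a ha hay => ?_, fun h => ?_⟩
  · have hmem : (P.part a).erase y ∈ eraseParts Q.parts y := by
      rw [← h, eraseParts_parts_eq_image]
      exact mem_image_of_mem _ (mem_erase.2 ⟨hay, ha⟩)
    rw [eraseParts_parts_eq_image] at hmem
    obtain ⟨c, -, hc⟩ := mem_image.1 hmem
    have hac : a ∈ Q.part c := mem_of_mem_erase (hc ▸ mem_erase.2 ⟨hay, P.mem_part ha⟩)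
    rw [← hc, Q.part_eq_of_mem (Q.part_mem.2 (Q.part_nonempty.1 ⟨a, hac⟩)) hac]
  · simp only [eraseParts_parts_eq_image]
    exact image_congr fun a ha => h a (mem_erase.1 ha).2 (mem_erase.1 ha).1

end EraseParts

section Move

open Finpartition

variable {α β : Type*} [DecidableEq α] [DecidableEq β] {S : Finset α} {g : α → β}
  {x w z : α}

lemma image_update_eq (hw : w ∈ S) (hz : z ∈ S) (hzx : z ≠ x) (hgz : g z = g x) :
    S.image (update g x (g w)) = S.image g := by
  ext c
  simp only [mem_image]
  constructor
  · rintro ⟨a, ha, rfl⟩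
    by_cases hax : a = x
    · exact ⟨w, hw, by rw [hax, update_self]⟩
    · exact ⟨a, ha, (update_of_ne hax _ _).symm⟩
  · rintro ⟨a, ha, rfl⟩
    by_cases hax : a = x
    · exact ⟨z, hz, by rw [update_of_ne hzx, hgz, hax]⟩
    · exact ⟨a, ha, update_of_ne hax _ _⟩

lemma eraseParts_ofFibers_update_eq_iff (hx : x ∈ S) (hw : w ∈ S) (hz : z ∈ S) (hzx : z ≠ x)
    (hgz : g z = g x) (hgw : g w ≠ g x) {y : α} :
    eraseParts (ofFibers S g).parts y = eraseParts (ofFibers S (update g x (g w))).parts y ↔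
      y = x := by
  have hwx : w ≠ x := fun h => hgw (h ▸ rfl)
  rw [eraseParts_eq_iff]
  refine ⟨fun h => ?_, ?_⟩
  · by_contra hyx
    -- one of `w`, `z` is not `y`, and the move changes whether it lies in the part of `x`
    obtain ⟨a, ha, hay, hax, hsep⟩ : ∃ a ∈ S, a ≠ y ∧ a ≠ x ∧
        ¬(g a = g x ↔ update g x (g w) a = update g x (g w) x) := by
      by_cases hwy : w = y
      · refine ⟨z, hz, fun hzy => hgw (by rw [hwy, ← hzy, hgz]), hzx, ?_⟩
        simp [update_of_ne hzx, hgz, Ne.symm hgw]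
      · exact ⟨w, hw, hwy, hwx, by simp [update_of_ne hwx, hgw]⟩
    have := congrArg (x ∈ ·) (h a ha hay)
    simp only [mem_erase, mem_part_ofFibers, eq_iff_iff] at this
    exact hsep (by simpa [Ne.symm hyx, ha, hx] using this)
  · rintro rfl a _ hay
    ext b
    by_cases hby : b = y <;> simp [mem_part_ofFibers, update_of_ne hay, update_of_ne, hby]

lemma card_parts_ofFibers_update (hw : w ∈ S) (hz : z ∈ S) (hzx : z ≠ x) (hgz : g z = g x) :
    #(ofFibers S (update g x (g w))).parts = #(ofFibers S g).parts := by
  rw [card_parts_ofFibers, card_parts_ofFibers, image_update_eq hw hz hzx hgz]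

lemma partitionGraph_adj_ofFibers_update {r : ℕ} (hx : x ∈ S) (hw : w ∈ S) (hz : z ∈ S)
    (hzx : z ≠ x) (hgz : g z = g x) (hgw : g w ≠ g x) (hP : #(ofFibers S g).parts = r)
    (hQ : #(ofFibers S (update g x (g w))).parts = r) :
    (partitionGraph S r).Adj ⟨ofFibers S g, hP⟩ ⟨ofFibers S (update g x (g w)), hQ⟩ := by
  have key := fun y => eraseParts_ofFibers_update_eq_iff hx hw hz hzx hgz hgw (y := y)
  exact ⟨fun h => hzx ((key z).1 (congrArg (fun P => eraseParts P.1.parts z) h)),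
    x, ⟨hx, (key x).2 rfl⟩, fun y hy => (key y).1 hy.2⟩

end Move

section StarPartition

open Finpartition

variable {α : Type*} [DecidableEq α] {S : Finset α}

/-- For `D ⊆ S.erase b`: the singletons `{a}`, `a ∈ D`, and the block `S \ D ∋ b`. -/
def starPartition (S D : Finset α) (b : α) : Finpartition S :=
  ofFibers S fun a => if a ∈ D then a else b

variable {D : Finset α} {b : α}

lemma card_parts_starPartition (hb : b ∈ S) (hD : D ⊆ S.erase b) :
    #(starPartition S D b).parts = #D + 1 := by
  have hbD : b ∉ D := fun h => (mem_erase.1 (hD h)).1 rfl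
  have : S.image (fun a => if a ∈ D then a else b) = insert b D := by
    ext c
    simp only [mem_image, mem_insert]
    constructor
    · rintro ⟨a, -, rfl⟩
      split_ifs with h
      exacts [Or.inr h, Or.inl rfl]
    · rintro (rfl | hc)
      · exact ⟨c, hb, if_neg hbD⟩
      · exact ⟨c, (mem_erase.1 (hD hc)).2, if_pos hc⟩
  rw [starPartition, card_parts_ofFibers, this, card_insert_of_notMem hbD]

lemma eq_starPartition (P : Finpartition S) (hb : b ∈ S)
    (h : ∀ a ∈ S, b ∉ P.part a → P.part a = {a}) :
    P = starPartition S {a ∈ S | b ∉ P.part a} b := by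
  conv_lhs => rw [← ofFibers_part P]
  refine ofFibers_congr fun a ha a' ha' => ?_
  have hpart : ∀ a ∈ S, b ∈ P.part a → P.part a = P.part b := fun a ha hba =>
    ((P.mem_part_iff_part_eq_part hb ha).1 hba).symm
  have hbb := P.mem_part hb
  have hne : ∀ c, b ∉ P.part c → P.part b ≠ {c} ∧ b ≠ c := fun c hbc =>
    ⟨fun he => hbc (mem_singleton.1 (he ▸ hbb) ▸ hbb), fun he => hbc (he ▸ hbb)⟩
  simp only [mem_filter, ha, ha', true_and]
  by_cases hba : b ∈ P.part a <;> by_cases hba' : b ∈ P.part a'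
  · rw [if_neg (not_not.2 hba), if_neg (not_not.2 hba'), hpart a ha hba, hpart a' ha' hba']
    exact iff_of_true rfl rfl
  · rw [if_neg (not_not.2 hba), if_pos hba', hpart a ha hba, h a' ha' hba']
    exact iff_of_false (hne a' hba').1 (hne a' hba').2
  · rw [if_pos hba, if_neg (not_not.2 hba'), h a ha hba, hpart a' ha' hba']
    exact iff_of_false (hne a hba).1.symm (hne a hba).2.symm
  · rw [if_pos hba, if_pos hba', h a ha hba, h a' ha' hba', singleton_inj]

end StarPartition

section Reachability

open Finpartition SimpleGraph

variable {α : Type*} [DecidableEq α] {S : Finset α} {r : ℕ} {b : α}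

lemma exists_reachable_starPartition (hb : b ∈ S) (P : Finpartition S) (hP : #P.parts = r) :
    ∃ D ⊆ S.erase b, ∃ hD : #(starPartition S D b).parts = r,
      (partitionGraph S r).Reachable ⟨P, hP⟩ ⟨starPartition S D b, hD⟩ := by
  induction hk : #S - #(P.part b) using Nat.strong_induction_on generalizing P with
  | _ k ih =>
  by_cases hstar : ∀ a ∈ S, b ∉ P.part a → P.part a = {a}
  · obtain ⟨D, hDdef⟩ : ∃ D, D = {a ∈ S | b ∉ P.part a} := ⟨_, rfl⟩
    have hD : D ⊆ S.erase b := fun a ha => by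
      obtain ⟨ha, hba⟩ := mem_filter.1 (hDdef ▸ ha)
      exact mem_erase.2 ⟨by rintro rfl; exact hba (P.mem_part ha), ha⟩
    have hPD : P = starPartition S D b := hDdef ▸ eq_starPartition P hb hstar
    subst hPD
    exact ⟨D, hD, hP, Reachable.refl _⟩
  push Not at hstar
  obtain ⟨y, hy, hby, hy1⟩ := hstar
  obtain ⟨z, hz, hzy⟩ : ∃ z ∈ P.part y, z ≠ y := by
    by_contra! h
    exact hy1 (eq_singleton_iff_unique_mem.2 ⟨P.mem_part hy, h⟩)
  have hzS := P.part_subset y hz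
  have hgz : P.part z = P.part y := P.part_eq_of_mem (P.part_mem.2 hy) hz
  have hgb : P.part b ≠ P.part y := fun h => hby (h ▸ P.mem_part hb)
  have hby' : b ≠ y := fun h => hby (h ▸ P.mem_part hb)
  set Q := ofFibers S (update P.part y (P.part b))
  have hQ : #Q.parts = r := by
    rw [card_parts_ofFibers_update hb hzS hzy hgz, ofFibers_part, hP]
  have hPQ : (partitionGraph S r).Adj ⟨P, hP⟩ ⟨Q, hQ⟩ := by
    simpa only [ofFibers_part] using
      partitionGraph_adj_ofFibers_update hy hb hzS hzy hgz hgb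
        ((ofFibers_part P).symm ▸ hP) hQ
  have hyP : y ∉ P.part b := fun h => hgb (P.part_eq_of_mem (P.part_mem.2 hb) h).symm
  have hgrow : P.part b ⊂ Q.part b := by
    refine (ssubset_iff_of_subset fun c hc => ?_).2 ⟨y, ?_, hyP⟩
    · have hcy : c ≠ y := by rintro rfl; exact hyP hc
      rw [mem_part_ofFibers, update_of_ne hby', update_of_ne hcy,
        P.part_eq_of_mem (P.part_mem.2 hb) hc]
      exact ⟨hb, P.part_subset b hc, rfl⟩
    · rw [mem_part_ofFibers, update_of_ne hby', update_self]
      exact ⟨hb, hy, rfl⟩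
  have hle := card_le_card (Q.part_subset b)
  have hlt := card_lt_card hgrow
  obtain ⟨D, hD, hDr, hQD⟩ := ih _ (by omega) Q hQ rfl
  exact ⟨D, hD, hDr, hPQ.reachable.trans hQD⟩

/- Two moves: `a` joins the singleton `{c}`, then `c` leaves for the big block. -/
lemma reachable_starPartition_exchange {D : Finset α} {a c : α} (hb : b ∈ S)
    (hD : D ⊆ S.erase b) (ha : a ∈ S.erase b) (haD : a ∉ D) (hc : c ∈ D)
    (hDr : #(starPartition S D b).parts = r)
    (hD'r : #(starPartition S (insert a (D.erase c)) b).parts = r) :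
    (partitionGraph S r).Reachable ⟨starPartition S D b, hDr⟩
      ⟨starPartition S (insert a (D.erase c)) b, hD'r⟩ := by
  obtain ⟨hab, haS⟩ := mem_erase.1 ha
  obtain ⟨hcb, hcS⟩ := mem_erase.1 (hD hc)
  have hbD : b ∉ D := fun h => (mem_erase.1 (hD h)).1 rfl
  have hac : a ≠ c := by rintro rfl; exact haD hc
  set σ : α → α := fun u => if u ∈ D then u else b
  set g := update σ a (σ c)
  have hσb : σ b = b := if_neg hbD
  have hσa : σ a = b := if_neg haD
  have hσc : σ c = c := if_pos hc
  have hg₁ : g c = g a := by simp [g, hσc, update_of_ne hac.symm]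
  have hg₂ : g b ≠ g c := by
    simp [g, hσb, update_of_ne hab.symm, update_of_ne hac.symm, hσc, hcb.symm]
  have h₁ : #(ofFibers S g).parts = r := by
    rw [card_parts_ofFibers_update hcS hb hab.symm (hσb.trans hσa.symm)]; exact hDr
  have h₂ : #(ofFibers S (update g c (g b))).parts = r := by
    rw [card_parts_ofFibers_update hb haS hac hg₁.symm]; exact h₁
  have hend : ofFibers S (update g c (g b)) = starPartition S (insert a (D.erase c)) b := by
    have hswap : ∀ u, update g c (g b) u =
        Equiv.swap a c (if u ∈ insert a (D.erase c) then u else b) := by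
      intro u
      simp only [g, σ, update_apply, Equiv.swap_apply_def, mem_insert, mem_erase]
      grind
    refine ofFibers_congr fun u _ v _ => ?_
    rw [hswap, hswap, (Equiv.swap a c).apply_eq_iff_eq]
  have step₁ := partitionGraph_adj_ofFibers_update haS hcS hb hab.symm (hσb.trans hσa.symm)
    (by rw [hσc, hσa]; exact hcb) hDr h₁
  have step₂ := partitionGraph_adj_ofFibers_update hcS hb haS hac hg₁.symm hg₂ h₁ h₂
  simp only [hend] at step₂
  exact step₁.reachable.trans step₂.reachable

lemma reachable_starPartition {D T : Finset α} (hb : b ∈ S) (hD : D ⊆ S.erase b)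
    (hT : T ⊆ S.erase b) (hDT : #D = #T) (hDr : #(starPartition S D b).parts = r)
    (hTr : #(starPartition S T b).parts = r) :
    (partitionGraph S r).Reachable ⟨starPartition S D b, hDr⟩
      ⟨starPartition S T b, hTr⟩ := by
  induction hk : #(D \ T) generalizing D with
  | zero =>
    obtain rfl : D = T :=
      eq_of_subset_of_card_le (sdiff_eq_empty_iff_subset.1 (card_eq_zero.1 hk)) hDT.ge
    rfl
  | succ k ih =>
    obtain ⟨c, hc⟩ : (D \ T).Nonempty := card_pos.1 (by omega)
    obtain ⟨a, ha⟩ : (T \ D).Nonempty := card_pos.1 (by rw [← card_sdiff_comm hDT]; omega)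
    obtain ⟨hcD, hcT⟩ := mem_sdiff.1 hc
    obtain ⟨haT, haD⟩ := mem_sdiff.1 ha
    have haD' : a ∉ D.erase c := fun h => haD (mem_of_mem_erase h)
    have hD' : insert a (D.erase c) ⊆ S.erase b :=
      insert_subset (hT haT) ((erase_subset c D).trans hD)
    have hD'T : #(insert a (D.erase c)) = #T := by
      rw [card_insert_of_notMem haD', card_erase_of_mem hcD, ← hDT]
      have := card_pos.2 ⟨c, hcD⟩
      omega
    have hD'r : #(starPartition S (insert a (D.erase c)) b).parts = r := by
      rw [card_parts_starPartition hb hD', hD'T, ← hDT, ← card_parts_starPartition hb hD, hDr]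
    have hk' : #(insert a (D.erase c) \ T) = k := by
      rw [insert_sdiff_of_mem _ haT, erase_sdiff_comm, card_erase_of_mem hc, hk,
        Nat.add_sub_cancel]
    exact (reachable_starPartition_exchange hb hD (hT haT) haD hcD hDr hD'r).trans
      (ih hD' hD'T hD'r hk')

end Reachability

/-- If `S` has `n ≥ r` elements, the `r`-partition graph `G[S,r]` is connected. -/
theorem partitionGraph_connected {α : Type*} [DecidableEq α] (S : Finset α) (n r : ℕ)
    (hn : S.card = n) (hr : 0 < r) (hnr : r ≤ n) :
    (partitionGraph S r).Connected := by
  obtain ⟨b, hb⟩ : S.Nonempty := card_pos.1 (by omega)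
  obtain ⟨T, hT, hTr⟩ := exists_subset_card_eq (s := S.erase b) (n := r - 1)
    (by rw [card_erase_of_mem hb]; omega)
  have hC : #(starPartition S T b).parts = r := by
    rw [card_parts_starPartition hb hT]; omega
  have hreach : ∀ P, (partitionGraph S r).Reachable P ⟨starPartition S T b, hC⟩ := by
    rintro ⟨P, hP⟩
    obtain ⟨D, hD, hDr, hPD⟩ := exists_reachable_starPartition hb P hP
    have hDT : #D = #T := by
      rw [card_parts_starPartition hb hD] at hDr; omega
    exact hPD.trans (reachable_starPartition hb hD hT hDT hDr hC)
  exact (SimpleGraph.connected_iff _).2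
    ⟨fun P Q => (hreach P).trans (hreach Q).symm, ⟨⟨_, hC⟩⟩⟩
end

section
/- Let S be a finite set with n elements, let r be a positive integer, and let P be a partition of S into exactly r nonempty parts having exactly k parts of cardinality one. Then the degree of P as a vertex of the r-partition graph G[S,r] equals (n - k)(r - 1). -/
open Finset

/-!
Deleting a point `x` turns a partition `P` of `S` into the partition `P.avoid {x}` of `S \ {x}`,
and if the part of `x` is not `{x}`, then `P` is recovered by inserting `x` into one of the parts
of `P.avoid {x}`. The number of parts drops exactly when `x` is a singleton, so two distinct
partitions with the same number of parts that agree off `x` both arise from the same partition of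
`S \ {x}` by inserting the non-singleton point `x` into two different parts: the neighbours of `P`
"at `x`" are the `r - 1` ways of moving `x` to another part, and there are `n - k` such points.
The point `x` is determined by the neighbour: if `x` moves into the part of `b` and leaves behind
`c`, the pairs `{x, b}` and `{x, c}` both change status, so a point whose removal reconciles the two
partitions has to be both `b` and `c`.
-/

namespace Finpartition

variable {α : Type*} [DecidableEq α] {S : Finset α} {x : α}

theorem eraseParts_eq_parts_avoid (P : Finpartition S) (x : α) :
    eraseParts P.parts x = (P.avoid {x}).parts := by
  ext t
  simp [eraseParts, avoid, ofErase, sdiff_singleton_eq_erase, nonempty_iff_ne_empty, and_comm]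

theorem notMem_of_mem_parts_of_ne_part (P : Finpartition S) {t : Finset α} (ht : t ∈ P.parts)
    (hne : t ≠ P.part x) : x ∉ t :=
  fun hxt => hne (P.part_eq_of_mem ht hxt).symm

theorem notMem_of_mem_parts_sdiff (R : Finpartition (S \ {x})) {B : Finset α}
    (hB : B ∈ R.parts) : x ∉ B :=
  fun hxB => (Finset.mem_sdiff.1 (R.le hB hxB)).2 (mem_singleton_self x)

theorem parts_avoid_singleton (P : Finpartition S) (hx : x ∈ S) :
    (P.avoid {x}).parts = (insert ((P.part x).erase x) (P.parts.erase (P.part x))).erase ∅ := by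
  have hparts : (P.avoid {x}).parts = (P.parts.image (· \ {x})).erase ∅ := rfl
  rw [hparts]
  congr 1
  conv_lhs => rw [← insert_erase (P.part_mem.2 hx), image_insert, sdiff_singleton_eq_erase]
  congr 1
  refine (image_congr fun t ht => ?_).trans image_id
  rw [sdiff_singleton_eq_erase, id, erase_eq_of_notMem
    (P.notMem_of_mem_parts_of_ne_part (mem_of_mem_erase ht) (ne_of_mem_erase ht))]

theorem parts_avoid_of_part_eq_singleton (P : Finpartition S) (hx : x ∈ S)
    (h : P.part x = {x}) : (P.avoid {x}).parts = P.parts.erase {x} := by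
  rw [P.parts_avoid_singleton hx, h, erase_singleton, erase_insert]
  exact fun h0 => P.empty_notMem_parts (mem_of_mem_erase h0)

theorem parts_avoid_of_part_ne_singleton (P : Finpartition S) (hx : x ∈ S)
    (h : P.part x ≠ {x}) :
    (P.avoid {x}).parts = insert ((P.part x).erase x) (P.parts.erase (P.part x)) := by
  rw [P.parts_avoid_singleton hx, erase_eq_of_notMem]
  intro h0
  rcases mem_insert.1 h0 with h0 | h0
  · exact ((erase_eq_empty_iff _ _).1 h0.symm).elim (P.ne_empty (P.part_mem.2 hx)) h
  · exact P.empty_notMem_parts (mem_of_mem_erase h0)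

theorem erase_part_mem_parts_avoid (P : Finpartition S) (hx : x ∈ S) (h : P.part x ≠ {x}) :
    (P.part x).erase x ∈ (P.avoid {x}).parts := by
  rw [P.parts_avoid_of_part_ne_singleton hx h]
  exact mem_insert_self _ _

theorem insert_singleton_parts_avoid (P : Finpartition S) (hx : x ∈ S) (h : P.part x = {x}) :
    insert {x} (P.avoid {x}).parts = P.parts := by
  rw [P.parts_avoid_of_part_eq_singleton hx h, insert_erase (h ▸ P.part_mem.2 hx)]

theorem card_parts_avoid_add_one (P : Finpartition S) (hx : x ∈ S) (h : P.part x = {x}) :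
    #(P.avoid {x}).parts + 1 = #P.parts := by
  rw [P.parts_avoid_of_part_eq_singleton hx h, card_erase_add_one (h ▸ P.part_mem.2 hx)]

@[simps]
def insertIntoPart (R : Finpartition (S \ {x})) (hx : x ∈ S) {B : Finset α}
    (hB : B ∈ R.parts) : Finpartition S where
  parts := insert (insert x B) (R.parts.erase B)
  supIndep := by
    rw [supIndep_iff_pairwiseDisjoint, coe_insert]
    refine (R.disjoint.subset (coe_subset.2 (erase_subset _ _))).insert fun t ht _ => ?_
    rw [mem_coe, mem_erase] at ht
    exact disjoint_insert_left.2
      ⟨R.notMem_of_mem_parts_sdiff ht.2, R.disjoint hB ht.2 (Ne.symm ht.1)⟩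
  sup_parts := by
    have hsup : B ∪ (R.parts.erase B).sup id = S \ {x} := by
      conv_rhs => rw [← R.sup_parts, ← insert_erase hB, sup_insert]
      rfl
    rw [sup_insert, id, sup_eq_union, insert_union, hsup, sdiff_singleton_eq_erase, insert_erase hx]
  bot_notMem h := by
    rcases mem_insert.1 h with h | h
    · exact insert_ne_empty x B h.symm
    · exact R.bot_notMem (mem_of_mem_erase h)

section insertIntoPart

variable (R : Finpartition (S \ {x})) (hx : x ∈ S) {B : Finset α} (hB : B ∈ R.parts)

theorem card_parts_insertIntoPart : #(R.insertIntoPart hx hB).parts = #R.parts := by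
  rw [insertIntoPart_parts, card_insert_of_notMem, card_erase_add_one hB]
  exact fun h => R.notMem_of_mem_parts_sdiff (mem_of_mem_erase h) (mem_insert_self x B)

theorem part_insertIntoPart_self : (R.insertIntoPart hx hB).part x = insert x B :=
  part_eq_of_mem _ (mem_insert_self _ _) (mem_insert_self x B)

theorem avoid_insertIntoPart : (R.insertIntoPart hx hB).avoid {x} = R := by
  have hxB := R.notMem_of_mem_parts_sdiff hB
  have hne : insert x B ≠ {x} := fun h => (R.nonempty_of_mem_parts hB).ne_empty <| by
    simpa [erase_insert hxB] using congrArg (·.erase x) h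
  ext1
  rw [parts_avoid_of_part_ne_singleton _ hx (by rwa [part_insertIntoPart_self]),
    part_insertIntoPart_self, insertIntoPart_parts, erase_insert hxB, erase_insert, insert_erase hB]
  exact fun h => R.notMem_of_mem_parts_sdiff (mem_of_mem_erase h) (mem_insert_self x B)

theorem insertIntoPart_inj {C : Finset α} (hC : C ∈ R.parts) :
    R.insertIntoPart hx hB = R.insertIntoPart hx hC ↔ B = C := by
  refine ⟨fun h => ?_, fun h => by subst h; rfl⟩
  have := congrArg (·.part x) h
  simp only [part_insertIntoPart_self] at this
  rw [← erase_insert (R.notMem_of_mem_parts_sdiff hB), this,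
    erase_insert (R.notMem_of_mem_parts_sdiff hC)]

end insertIntoPart

theorem exists_eq_insertIntoPart (P : Finpartition S) {R : Finpartition (S \ {x})}
    (hR : P.avoid {x} = R) (hx : x ∈ S) (h : P.part x ≠ {x}) :
    ∃ hB : (P.part x).erase x ∈ R.parts, P = R.insertIntoPart hx hB := by
  subst hR
  refine ⟨P.erase_part_mem_parts_avoid hx h, Finpartition.ext ?_⟩
  rw [insertIntoPart_parts, insert_erase (P.mem_part hx), P.parts_avoid_of_part_ne_singleton hx h,
    erase_insert, insert_erase (P.part_mem.2 hx)]
  intro hmem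
  obtain ⟨c, hc⟩ := P.nonempty_of_mem_parts (mem_of_mem_erase hmem)
  exact ne_of_mem_erase hmem
    (P.eq_of_mem_parts (mem_of_mem_erase hmem) (P.part_mem.2 hx) hc (mem_of_mem_erase hc))

theorem card_parts_avoid_of_part_ne_singleton (P : Finpartition S) (hx : x ∈ S)
    (h : P.part x ≠ {x}) : #(P.avoid {x}).parts = #P.parts := by
  obtain ⟨hB, hP⟩ := P.exists_eq_insertIntoPart rfl hx h
  conv_rhs => rw [hP]
  exact (card_parts_insertIntoPart _ hx hB).symm

theorem card_parts_insertIntoPart_avoid (P : Finpartition S) (hx : x ∈ S) (h : P.part x ≠ {x})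
    {B : Finset α} (hB : B ∈ (P.avoid {x}).parts) :
    #((P.avoid {x}).insertIntoPart hx hB).parts = #P.parts :=
  (card_parts_insertIntoPart _ hx hB).trans (P.card_parts_avoid_of_part_ne_singleton hx h)

theorem card_parts_avoid_lt_iff (P : Finpartition S) (hx : x ∈ S) :
    #(P.avoid {x}).parts < #P.parts ↔ P.part x = {x} := by
  by_cases h : P.part x = {x}
  · simp [h, ← P.card_parts_avoid_add_one hx h]
  · simp [h, P.card_parts_avoid_of_part_ne_singleton hx h]

theorem part_avoid_singleton (P : Finpartition S) {a : α} (ha : a ∈ S) (hax : a ≠ x) :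
    (P.avoid {x}).part a = (P.part a).erase x := by
  refine part_eq_of_mem _ ((P.mem_avoid).2 ⟨P.part a, P.part_mem.2 ha, fun h => ?_,
    sdiff_singleton_eq_erase _ _⟩) (mem_erase.2 ⟨hax, P.mem_part ha⟩)
  exact hax (mem_singleton.1 (h (P.mem_part ha)))

theorem mem_part_iff_of_avoid_eq {P Q : Finpartition S} {a b : α} (h : P.avoid {x} = Q.avoid {x})
    (ha : a ∈ S) (hax : a ≠ x) (hbx : b ≠ x) : b ∈ P.part a ↔ b ∈ Q.part a := by
  have := congrArg (b ∈ ·.part a) h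
  simpa [part_avoid_singleton _ ha hax, hbx] using this

theorem eq_of_avoid_eq_avoid_insertIntoPart (P : Finpartition S) (hx : x ∈ S)
    (h : P.part x ≠ {x}) {B : Finset α} (hB : B ∈ (P.avoid {x}).parts)
    (hBx : B ≠ (P.part x).erase x) {y : α}
    (hy : P.avoid {y} = ((P.avoid {x}).insertIntoPart hx hB).avoid {y}) : y = x := by
  by_contra hyx
  have hxy : x ≠ y := Ne.symm hyx
  have hdisj : Disjoint B ((P.part x).erase x) :=
    (P.avoid {x}).disjoint hB (P.erase_part_mem_parts_avoid hx h) hBx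
  obtain ⟨b, hb⟩ := (P.avoid {x}).nonempty_of_mem_parts hB
  obtain ⟨c, hc⟩ := nonempty_iff_ne_empty.2 fun h0 =>
    ((erase_eq_empty_iff _ _).1 h0).elim (P.ne_empty (P.part_mem.2 hx)) h
  have hbx : b ≠ x := fun hbx => (P.avoid {x}).notMem_of_mem_parts_sdiff hB (hbx ▸ hb)
  have hb_y : b = y := by
    by_contra hby
    have hbQ : b ∈ ((P.avoid {x}).insertIntoPart hx hB).part x := by
      rw [part_insertIntoPart_self]
      exact mem_insert_of_mem hb
    exact disjoint_left.1 hdisj hb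
      (mem_erase.2 ⟨hbx, (mem_part_iff_of_avoid_eq hy hx hxy hby).2 hbQ⟩)
  have hc_y : c = y := by
    by_contra hcy
    have hcQ := (mem_part_iff_of_avoid_eq hy hx hxy hcy).1 (mem_of_mem_erase hc)
    rw [part_insertIntoPart_self, mem_insert] at hcQ
    exact hcQ.elim (ne_of_mem_erase hc) (disjoint_right.1 hdisj hc)
  exact disjoint_left.1 hdisj hb (hb_y.trans hc_y.symm ▸ hc)

theorem exists_insertIntoPart_of_avoid_eq {P Q : Finpartition S} (hcard : #P.parts = #Q.parts)
    (hne : P ≠ Q) (hx : x ∈ S) (h : P.avoid {x} = Q.avoid {x}) :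
    P.part x ≠ {x} ∧ ∃ B, ∃ hB : B ∈ (P.avoid {x}).parts,
      B ≠ (P.part x).erase x ∧ Q = (P.avoid {x}).insertIntoPart hx hB := by
  have hsingleton : P.part x = {x} ↔ Q.part x = {x} := by
    rw [← P.card_parts_avoid_lt_iff hx, ← Q.card_parts_avoid_lt_iff hx, h, hcard]
  have hPx : P.part x ≠ {x} := fun hP => hne <| Finpartition.ext <| by
    rw [← P.insert_singleton_parts_avoid hx hP,
      ← Q.insert_singleton_parts_avoid hx (hsingleton.1 hP), h]
  obtain ⟨hA, hP⟩ := P.exists_eq_insertIntoPart rfl hx hPx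
  obtain ⟨hB, hQ⟩ := Q.exists_eq_insertIntoPart h.symm hx (hsingleton.not.1 hPx)
  refine ⟨hPx, _, hB, fun hBA => hne ?_, hQ⟩
  exact hP.trans (((insertIntoPart_inj _ hx hA hB).2 hBA.symm).trans hQ.symm)

-- `⟨x, B⟩` moves the non-singleton point `x` into the part `B` of `P.avoid {x}`.
def moves (P : Finpartition S) : Finset (Σ _ : α, Finset α) :=
  (S.filter fun x => P.part x ≠ {x}).sigma fun x => (P.avoid {x}).parts.erase ((P.part x).erase x)

theorem mem_moves {P : Finpartition S} {m : Σ _ : α, Finset α} :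
    m ∈ P.moves ↔ (m.1 ∈ S ∧ P.part m.1 ≠ {m.1}) ∧
      m.2 ∈ (P.avoid {m.1}).parts ∧ m.2 ≠ (P.part m.1).erase m.1 := by
  simp only [moves, mem_sigma, mem_filter, mem_erase, and_comm]

theorem card_moves (P : Finpartition S) :
    #P.moves = #(S.filter fun x => P.part x ≠ {x}) * (#P.parts - 1) := by
  rw [moves, card_sigma]
  refine sum_const_nat fun x hx => ?_
  rw [mem_filter] at hx
  rw [card_erase_of_mem (P.erase_part_mem_parts_avoid hx.1 hx.2),
    P.card_parts_avoid_of_part_ne_singleton hx.1 hx.2]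

theorem card_filter_part_ne_singleton (P : Finpartition S) :
    #(S.filter fun x => P.part x ≠ {x}) = #S - #(P.parts.filter fun t => #t = 1) := by
  have hsingletons : P.parts.filter (fun t => #t = 1) =
      (S.filter fun x => P.part x = {x}).map ⟨singleton, singleton_injective⟩ := by
    ext t
    simp only [mem_filter, card_eq_one, mem_map, Function.Embedding.coeFn_mk]
    constructor
    · rintro ⟨ht, a, rfl⟩
      have ha : a ∈ S := P.le ht (mem_singleton_self a)
      exact ⟨a, ⟨ha, P.part_eq_of_mem ht (mem_singleton_self a)⟩, rfl⟩
    · rintro ⟨a, ⟨ha, h⟩, rfl⟩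
      exact ⟨h ▸ P.part_mem.2 ha, a, rfl⟩
  rw [hsingletons, card_map, ← card_filter_add_card_filter_not (s := S) (fun x => P.part x = {x})]
  simp

end Finpartition

section PartitionGraph

open Finpartition

variable {α : Type*} [DecidableEq α] {S : Finset α} {r : ℕ} {x : α}

theorem partitionGraph_adj_iff {P Q : {P : Finpartition S // #P.parts = r}} :
    (partitionGraph S r).Adj P Q ↔
      P.1 ≠ Q.1 ∧ ∃! x, x ∈ S ∧ P.1.avoid {x} = Q.1.avoid {x} := by
  simp only [partitionGraph, eraseParts_eq_parts_avoid, ← Finpartition.ext_iff, ne_eq,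
    Subtype.ext_iff]

theorem partitionGraph_adj_insertIntoPart {P : Finpartition S} (hP : #P.parts = r) (hx : x ∈ S)
    (hPx : P.part x ≠ {x}) {B : Finset α} (hB : B ∈ (P.avoid {x}).parts)
    (hBx : B ≠ (P.part x).erase x) :
    (partitionGraph S r).Adj ⟨P, hP⟩ ⟨(P.avoid {x}).insertIntoPart hx hB,
      (P.card_parts_insertIntoPart_avoid hx hPx hB).trans hP⟩ := by
  obtain ⟨hA, hPeq⟩ := P.exists_eq_insertIntoPart rfl hx hPx
  refine partitionGraph_adj_iff.2 ⟨fun h => hBx ?_, x,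
    ⟨hx, (avoid_insertIntoPart _ hx hB).symm⟩,
    fun y hy => P.eq_of_avoid_eq_avoid_insertIntoPart hx hPx hB hBx hy.2⟩
  exact ((insertIntoPart_inj _ hx hA hB).1 (hPeq.symm.trans h)).symm

theorem ncard_neighborSet_partitionGraph (P : Finpartition S) (hP : #P.parts = r) :
    ((partitionGraph S r).neighborSet ⟨P, hP⟩).ncard = #P.moves := by
  rw [← Set.ncard_coe_finset]
  symm
  refine Set.ncard_congr (fun m hm => have hm := mem_moves.1 hm
      ⟨(P.avoid {m.1}).insertIntoPart hm.1.1 hm.2.1,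
        (P.card_parts_insertIntoPart_avoid hm.1.1 hm.1.2 hm.2.1).trans hP⟩) ?_ ?_ ?_
  · rintro ⟨x, B⟩ hm
    obtain ⟨⟨hx, hPx⟩, hB, hBx⟩ := mem_moves.1 hm
    exact partitionGraph_adj_insertIntoPart hP hx hPx hB hBx
  · rintro ⟨x, B⟩ ⟨y, C⟩ hm hm' h
    obtain ⟨⟨hx, hPx⟩, hB, hBx⟩ := mem_moves.1 hm
    obtain ⟨-, hC, -⟩ := mem_moves.1 hm'
    have hQ := congrArg Subtype.val h
    obtain rfl : y = x := P.eq_of_avoid_eq_avoid_insertIntoPart hx hPx hB hBx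
      (by simp only at hQ; rw [hQ, avoid_insertIntoPart])
    exact congrArg (Sigma.mk _) ((insertIntoPart_inj _ hx hB hC).1 hQ)
  · rintro Q hQ
    obtain ⟨hne, x, ⟨hx, h⟩, -⟩ := partitionGraph_adj_iff.1 hQ
    obtain ⟨hPx, B, hB, hBx, hQeq⟩ :=
      exists_insertIntoPart_of_avoid_eq (hP.trans Q.2.symm) hne hx h
    exact ⟨⟨x, B⟩, mem_moves.2 ⟨⟨hx, hPx⟩, hB, hBx⟩, Subtype.ext hQeq.symm⟩

end PartitionGraph

theorem partitionGraph_degree_general {α : Type*} [DecidableEq α] (S : Finset α) (n r k : ℕ)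
    (hn : S.card = n)
    (P : Finpartition S) (hP : P.parts.card = r)
    (hk : (P.parts.filter fun t => t.card = 1).card = k) :
    ((partitionGraph S r).neighborSet ⟨P, hP⟩).ncard = (n - k) * (r - 1) := by
  rw [ncard_neighborSet_partitionGraph, P.card_moves, P.card_filter_part_ne_singleton, hn, hk, hP]

/-- A partition of an `n`-element set into exactly `r` nonempty parts having exactly `k`
singleton parts has degree `(n-k)(r-1)` in the `r`-partition graph. -/
theorem partitionGraph_degree {α : Type*} [DecidableEq α] (S : Finset α) (n r k : ℕ)
    (hn : S.card = n) (hr : 0 < r)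
    (P : Finpartition S) (hP : P.parts.card = r)
    (hk : (P.parts.filter fun t => t.card = 1).card = k) :
    ((partitionGraph S r).neighborSet ⟨P, hP⟩).ncard = (n - k) * (r - 1) :=
  partitionGraph_degree_general S n r k hn P hP hk
end

section
/- Let S be a finite set with an even number n ≥ 2 of elements. Then the 2-partition graph G[S,2] is bipartite; in fact, every edge of G[S,2] joins a partition both of whose parts have odd cardinality to a partition both of whose parts have even cardinality. -/
open Finset

/-!
Write a partition of `S` into two parts as `{S \ B, B}` with `x ∉ B`, and another one as
`{S \ D, D}` with `x ∉ D`. If they differ but agree after removing `x`, then `B ≠ D`, and `B`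
survives the removal of `x` from the first partition, so it must be `(S \ D).erase x`.
Hence `|B| + |D| + 1 = |S|`, so for `|S|` even exactly one of `|B|`, `|D|` is odd, and the part
sizes `|S| - |B|, |B|` and `|S| - |D|, |D|` are all odd for one partition and all even for
the other.
-/

theorem SimpleGraph.colorable_two_of_adj_ne {V : Type*} (G : SimpleGraph V) (p : V → Prop)
    (hp : ∀ ⦃u v⦄, G.Adj u v → p u ≠ p v) : G.Colorable 2 :=
  Fintype.card_prop ▸ (SimpleGraph.Coloring.mk p fun h => hp h).colorable

section

variable {α : Type*} [DecidableEq α]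

theorem mem_eraseParts {parts : Finset (Finset α)} {x : α} {s : Finset α} :
    s ∈ eraseParts parts x ↔ (∃ t ∈ parts, t.erase x = s) ∧ s.Nonempty := by
  simp [eraseParts]

theorem Finpartition.exists_parts_eq_sdiff_pair {S : Finset α} (P : Finpartition S)
    (hP : P.parts.card = 2) {x : α} (hx : x ∈ S) :
    ∃ B ⊆ S, B.Nonempty ∧ x ∉ B ∧ P.parts = {S \ B, B} := by
  obtain ⟨A, B, hAB, hparts⟩ := card_eq_two.mp hP
  have hA : A ∈ P.parts := by simp [hparts]
  have hB : B ∈ P.parts := by simp [hparts]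
  have hdisj : Disjoint A B := P.disjoint hA hB hAB
  have hunion : A ∪ B = S := by simpa [hparts] using P.sup_parts
  rcases mem_union.mp (hunion ▸ hx : x ∈ A ∪ B) with hxA | hxB
  · refine ⟨B, P.le hB, P.nonempty_of_mem_parts hB, disjoint_left.mp hdisj hxA, ?_⟩
    rw [hparts, ← hunion, union_sdiff_cancel_right hdisj]
  · refine ⟨A, P.le hA, P.nonempty_of_mem_parts hA, disjoint_right.mp hdisj hxB, ?_⟩
    rw [hparts, pair_comm, ← hunion, union_sdiff_cancel_left hdisj]

theorem eq_erase_sdiff_of_eraseParts_eq {S B D : Finset α} {x : α} (hB : B.Nonempty)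
    (hxB : x ∉ B) (hxD : x ∉ D) (hBD : B ≠ D)
    (h : eraseParts {S \ B, B} x = eraseParts {S \ D, D} x) : B = (S \ D).erase x := by
  have hmem : B ∈ eraseParts {S \ B, B} x :=
    mem_eraseParts.mpr ⟨⟨B, by simp, erase_eq_of_notMem hxB⟩, hB⟩
  rw [h, mem_eraseParts] at hmem
  obtain ⟨⟨t, ht, rfl⟩, -⟩ := hmem
  rcases mem_insert.mp ht with rfl | ht
  · rfl
  · rw [mem_singleton.mp ht, erase_eq_of_notMem hxD] at hBD
    exact (hBD rfl).elim

theorem partitionGraph_two_adj_parts_parity {S : Finset α} (hS : Even S.card)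
    {P Q : {P : Finpartition S // P.parts.card = 2}} (hadj : (partitionGraph S 2).Adj P Q) :
    ((∀ t ∈ P.1.parts, Odd t.card) ∧ ∀ t ∈ Q.1.parts, Even t.card) ∨
      ((∀ t ∈ P.1.parts, Even t.card) ∧ ∀ t ∈ Q.1.parts, Odd t.card) := by
  obtain ⟨hPQ, x, ⟨hx, h⟩, -⟩ := hadj
  obtain ⟨B, hBS, hB, hxB, hPB⟩ := P.1.exists_parts_eq_sdiff_pair P.2 hx
  obtain ⟨D, hDS, -, hxD, hQD⟩ := Q.1.exists_parts_eq_sdiff_pair Q.2 hx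
  have hBD : B ≠ D := by
    rintro rfl
    exact hPQ (Subtype.ext (Finpartition.ext (hPB.trans hQD.symm)))
  rw [hPB, hQD] at h ⊢
  have hcard : B.card + D.card + 1 = S.card := by
    have hBcard := congrArg card (eq_erase_sdiff_of_eraseParts_eq hB hxB hxD hBD h)
    rw [card_erase_of_mem (mem_sdiff.mpr ⟨hx, hxD⟩), card_sdiff_of_subset hDS] at hBcard
    have := card_pos.mpr hB
    have := card_le_card hDS
    omega
  simp only [mem_insert, mem_singleton, forall_eq_or_imp, forall_eq, card_sdiff_of_subset hBS,
    card_sdiff_of_subset hDS, Nat.odd_iff, Nat.even_iff] at hS ⊢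
  omega

end

theorem partitionGraph_two_bipartite_general {α : Type*} [DecidableEq α] (S : Finset α) (n : ℕ)
    (hn : S.card = n) (hev : Even n) :
    (partitionGraph S 2).Colorable 2 ∧
      ∀ P Q, (partitionGraph S 2).Adj P Q →
        ((∀ t ∈ P.1.parts, Odd t.card) ∧ ∀ t ∈ Q.1.parts, Even t.card) ∨
          ((∀ t ∈ P.1.parts, Even t.card) ∧ ∀ t ∈ Q.1.parts, Odd t.card) := by
  subst hn
  refine ⟨(partitionGraph S 2).colorable_two_of_adj_ne (fun P => ∀ t ∈ P.1.parts, Odd t.card) ?_,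
    fun P Q => partitionGraph_two_adj_parts_parity hev⟩
  intro P Q hadj
  obtain ⟨t, ht⟩ : P.1.parts.Nonempty := card_pos.mp (by rw [P.2]; norm_num)
  obtain ⟨s, hs⟩ : Q.1.parts.Nonempty := card_pos.mp (by rw [Q.2]; norm_num)
  rcases partitionGraph_two_adj_parts_parity hev hadj with ⟨hPodd, hQeven⟩ | ⟨hPeven, hQodd⟩
  · exact fun hPQ => Nat.not_odd_iff_even.mpr (hQeven s hs) ((hPQ ▸ hPodd) s hs)
  · exact fun hPQ => Nat.not_odd_iff_even.mpr (hPeven t ht) ((hPQ ▸ hQodd) t ht)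

/-- For a set `S` of even cardinality `n ≥ 2`, the `2`-partition graph `G[S,2]` is
bipartite: it is 2-colorable and, in fact, every edge joins a partition both of whose
parts have odd cardinality to a partition both of whose parts have even cardinality. -/
theorem partitionGraph_two_bipartite {α : Type*} [DecidableEq α] (S : Finset α) (n : ℕ)
    (hn : S.card = n) (h2 : 2 ≤ n) (hev : Even n) :
    (partitionGraph S 2).Colorable 2 ∧
      ∀ P Q, (partitionGraph S 2).Adj P Q →
        ((∀ t ∈ P.1.parts, Odd t.card) ∧ ∀ t ∈ Q.1.parts, Even t.card) ∨
          ((∀ t ∈ P.1.parts, Even t.card) ∧ ∀ t ∈ Q.1.parts, Odd t.card) :=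
  partitionGraph_two_bipartite_general S n hn hev
end
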